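/- arXiv:2501.03168 — 9 statements merged into one kernel-verified Lean document; each statement's English description precedes it below -/
import Mathlib

section
/- Let N ≥ 2 be an integer and 0 < β < 1. If (u_n) ⊂ E_N converges weakly in W^{1,N}(0,1) to u (equivalently, u_n → u in L^p(0,1) for every p and hence pointwise a.e. along a subsequence), then I_β(u_n) → I_β(u), i.e. the functional I_β is weakly continuous on E_N for every β < 1. -/
/-!
Dominated convergence. By Jensen's inequality `|u(s)|^N ≤ s^(N-1) ∫₀ˢ |u'|^N ≤ s^(N-1)` on `E_N`,
so the exponent `β log(e/s) u(s)^N / s^(N-1)` is at most `β log(e/s)` and every integrand is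
dominated by `e^β s^(-β)`, which is integrable since `β < 1`.

Pointwise convergence `u_n(s) → u(s)` comes from the weak convergence of the derivatives: pairing
`u_n'` with the continuous ramp that is `1` up to `s - δ` and `0` from `s` on recovers
`u_n(s) = ∫₀ˢ u_n'` up to `∫_{s-δ}^s |u_n'|`, and by Jensen again this error is at most
`δ^((N-1)/N)`, uniformly in `n`.
-/

open MeasureTheory Real Set Filter

/-- `u` belongs to `E_N` with weak derivative `g` : `u` is absolutely continuous on `[0,1]`
(it is the integral of its weak derivative `g`), `u 0 = 0`, `|g|^N` is integrable on `(0,1)`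
and `∫₀¹ |g|^N = 1`. -/
def MemEN (N : ℕ) (u g : ℝ → ℝ) : Prop :=
  (∀ s ∈ Set.Icc (0:ℝ) 1, u s = ∫ t in (0:ℝ)..s, g t) ∧
  u 0 = 0 ∧
  IntervalIntegrable g MeasureTheory.volume 0 1 ∧
  MeasureTheory.IntegrableOn (fun t => |g t| ^ N) (Set.Ioc (0:ℝ) 1) ∧
  (∫ t in Set.Ioc (0:ℝ) 1, |g t| ^ N) = 1

/-- The Limiting-Bliss functional `I_β`. -/
noncomputable def Ifun (N : ℕ) (β : ℝ) (v : ℝ → ℝ) : ℝ :=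
  ∫ s in Set.Ioc (0:ℝ) 1,
    Real.exp (β * Real.log (Real.exp 1 / s) * (v s ^ N / s ^ (N - 1)))

open Topology

theorem tendsto_of_forall_dist_le {ι α : Type*} [PseudoMetricSpace α] {l : Filter ι}
    {a : ι → α} {A : α}
    (h : ∀ ε > 0, ∃ b : ι → α, ∃ B, Tendsto b l (𝓝 B) ∧ (∀ i, dist (a i) (b i) ≤ ε) ∧
      dist B A ≤ ε) :
    Tendsto a l (𝓝 A) := by
  refine Metric.tendsto_nhds.2 fun ε hε => ?_
  obtain ⟨b, B, hb, hab, hBA⟩ := h (ε / 4) (by positivity)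
  filter_upwards [Metric.tendsto_nhds.1 hb (ε / 4) (by positivity)] with i hi
  calc dist (a i) A ≤ dist (a i) (b i) + dist (b i) B + dist B A := dist_triangle4 _ _ _ _
    _ ≤ ε / 4 + ε / 4 + ε / 4 := add_le_add (add_le_add (hab i) hi.le) hBA
    _ < ε := by linarith

theorem pow_setIntegral_abs_le {α : Type*} [MeasurableSpace α] {μ : Measure α} {t : Set α}
    {N : ℕ} (hN : N ≠ 0) (ht : μ t ≠ ⊤) {g : α → ℝ} (hg : IntegrableOn g t μ)
    (hgN : IntegrableOn (fun x => |g x| ^ N) t μ) :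
    (∫ x in t, |g x| ∂μ) ^ N ≤ μ.real t ^ (N - 1) * ∫ x in t, |g x| ^ N ∂μ := by
  rcases eq_or_ne (μ t) 0 with h0 | h0
  · simp [Measure.restrict_eq_zero.2 h0, hN]
  have hm : 0 < μ.real t := ENNReal.toReal_pos h0 ht
  have jensen := (convexOn_pow N).map_set_average_le (continuousOn_pow N) isClosed_Ici h0 ht
    (.of_forall fun x => abs_nonneg (g x)) hg.abs hgN
  simp only [setAverage_eq, smul_eq_mul, mul_pow, inv_pow] at jensen
  rw [inv_mul_le_iff₀ (pow_pos hm N)] at jensen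
  rwa [pow_sub₀ _ hm.ne' (Nat.one_le_iff_ne_zero.2 hN), pow_one, mul_assoc]

theorem pow_setIntegral_Ioc_abs_le {N : ℕ} (hN : N ≠ 0) {g : ℝ → ℝ}
    (hg : IntegrableOn g (Ioc 0 1)) (hgN : IntegrableOn (fun t => |g t| ^ N) (Ioc 0 1))
    {a b : ℝ} (ha : 0 ≤ a) (hab : a ≤ b) (hb : b ≤ 1) :
    (∫ t in Ioc a b, |g t|) ^ N ≤ (b - a) ^ (N - 1) * ∫ t in Ioc 0 1, |g t| ^ N := by
  have hsub : Ioc a b ⊆ Ioc 0 1 := Ioc_subset_Ioc ha hb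
  calc (∫ t in Ioc a b, |g t|) ^ N
      ≤ volume.real (Ioc a b) ^ (N - 1) * ∫ t in Ioc a b, |g t| ^ N :=
        pow_setIntegral_abs_le hN measure_Ioc_lt_top.ne (hg.mono_set hsub) (hgN.mono_set hsub)
    _ ≤ (b - a) ^ (N - 1) * ∫ t in Ioc 0 1, |g t| ^ N := by
        rw [Real.volume_real_Ioc_of_le hab]
        exact mul_le_mul_of_nonneg_left
          (setIntegral_mono_set hgN (.of_forall fun t => by positivity) hsub.eventuallyLE)
          (pow_nonneg (sub_nonneg.2 hab) _)

theorem tendsto_setIntegral_Ioc_sub_nhds_zero {f : ℝ → ℝ} {a s : ℝ} (has : a < s)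
    (hf : IntegrableOn f (Ioc a s)) :
    Tendsto (fun δ => ∫ t in Ioc (s - δ) s, f t) (𝓝 0) (𝓝 0) := by
  have hvol : Tendsto (fun δ => volume.restrict (Ioc a s) (Ioc (s - δ) s)) (𝓝 0) (𝓝 0) := by
    have hlen : Tendsto (fun δ : ℝ => ENNReal.ofReal δ) (𝓝 0) (𝓝 0) := by
      simpa using ENNReal.tendsto_ofReal (tendsto_id (x := 𝓝 (0 : ℝ)))
    refine tendsto_of_tendsto_of_tendsto_of_le_of_le tendsto_const_nhds hlen
      (fun _ => bot_le) fun δ => ?_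
    simpa [Real.volume_Ioc] using
      Measure.restrict_apply_le (μ := volume) (Ioc a s) (Ioc (s - δ) s)
  refine (hf.tendsto_setIntegral_nhds_zero hvol).congr' ?_
  filter_upwards [eventually_lt_nhds (sub_pos.2 has)] with δ hδ
  rw [Measure.restrict_restrict measurableSet_Ioc,
    inter_eq_left.2 (Ioc_subset_Ioc (by linarith) le_rfl)]

noncomputable def cutoff (s δ t : ℝ) : ℝ := max 0 (min 1 ((s - t) / δ))

theorem continuous_cutoff (s δ : ℝ) : Continuous (cutoff s δ) := by
  unfold cutoff; fun_prop

theorem abs_cutoff_sub_indicator_le {s δ : ℝ} (hδ : 0 < δ) (t : ℝ) :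
    |cutoff s δ t - (Iic s).indicator 1 t| ≤ (Ioc (s - δ) s).indicator 1 t := by
  unfold cutoff
  rcases le_or_gt t (s - δ) with h | h
  · have : 1 ≤ (s - t) / δ := (le_div_iff₀ hδ).2 (by linarith)
    simp [indicator, this, show t ≤ s by linarith, show ¬ s - δ < t by linarith]
  rcases le_or_gt t s with h' | h'
  · have h1 : 0 ≤ (s - t) / δ := div_nonneg (by linarith) hδ.le
    have h2 : (s - t) / δ ≤ 1 := (div_le_one hδ).2 (by linarith)
    rw [min_eq_right h2, max_eq_right h1, indicator_of_mem (show t ∈ Iic s from h'),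
      indicator_of_mem (show t ∈ Ioc (s - δ) s from ⟨h, h'⟩), Pi.one_apply, abs_le]
    constructor <;> linarith
  · have : (s - t) / δ ≤ 0 := div_nonpos_of_nonpos_of_nonneg (by linarith) hδ.le
    simp [indicator, this, not_le.2 h']

theorem abs_setIntegral_mul_cutoff_sub_le {h : ℝ → ℝ} (hh : IntegrableOn h (Ioc 0 1))
    {s δ : ℝ} (hδ : 0 < δ) (hδs : δ ≤ s) (hs : s ≤ 1) :
    |(∫ t in Ioc 0 1, h t * cutoff s δ t) - ∫ t in Ioc 0 s, h t| ≤
      ∫ t in Ioc (s - δ) s, |h t| := by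
  have hcut : IntegrableOn (fun t => h t * cutoff s δ t) (Ioc 0 1) :=
    hh.mul_bdd (c := 1) (continuous_cutoff s δ).aestronglyMeasurable <| .of_forall fun t =>
      abs_le.2 ⟨by unfold cutoff; linarith [le_max_left 0 (min 1 ((s - t) / δ))],
        max_le zero_le_one (min_le_left _ _)⟩
  have hhead : ∫ t in Ioc 0 s, h t = ∫ t in Ioc 0 1, (Iic s).indicator h t := by
    rw [setIntegral_indicator measurableSet_Iic, Ioc_inter_Iic, min_eq_right hs]
  have htail : ∫ t in Ioc (s - δ) s, |h t| =
      ∫ t in Ioc 0 1, (Ioc (s - δ) s).indicator (fun t => |h t|) t := by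
    rw [setIntegral_indicator measurableSet_Ioc,
      inter_eq_right.2 (Ioc_subset_Ioc (by linarith) hs)]
  rw [hhead, htail, ← integral_sub hcut (hh.indicator measurableSet_Iic)]
  refine abs_integral_le_integral_abs.trans <| setIntegral_mono
    (hcut.sub (hh.indicator measurableSet_Iic)).abs
    (hh.abs.indicator measurableSet_Ioc) fun t => ?_
  calc |h t * cutoff s δ t - (Iic s).indicator h t|
      = |h t| * |cutoff s δ t - (Iic s).indicator 1 t| := by
        rw [← abs_mul]
        by_cases ht : t ∈ Iic s <;> simp [ht, mul_sub]
    _ ≤ |h t| * (Ioc (s - δ) s).indicator 1 t := by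
        gcongr; exact abs_cutoff_sub_indicator_le hδ t
    _ = (Ioc (s - δ) s).indicator (fun t => |h t|) t := by
        by_cases ht : t ∈ Ioc (s - δ) s <;> simp [ht]

theorem tendsto_setIntegral_Ioc_of_tendsto_integral_mul {N : ℕ} (hN : 1 < N)
    {g : ℕ → ℝ → ℝ} {glim : ℝ → ℝ} {M : ℝ}
    (hg : ∀ n, IntegrableOn (g n) (Ioc 0 1))
    (hgN : ∀ n, IntegrableOn (fun t => |g n t| ^ N) (Ioc 0 1))
    (hM : ∀ n, ∫ t in Ioc 0 1, |g n t| ^ N ≤ M) (hglim : IntegrableOn glim (Ioc 0 1))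
    (hweak : ∀ φ : ℝ → ℝ, Continuous φ → Tendsto (fun n => ∫ t in Ioc 0 1, g n t * φ t)
      atTop (𝓝 (∫ t in Ioc 0 1, glim t * φ t)))
    {s : ℝ} (hs : s ∈ Ioc 0 1) :
    Tendsto (fun n => ∫ t in Ioc 0 s, g n t) atTop (𝓝 (∫ t in Ioc 0 s, glim t)) := by
  obtain ⟨hs0, hs1⟩ := hs
  refine tendsto_of_forall_dist_le fun ε hε => ?_
  have hpow : Tendsto (fun δ : ℝ => δ ^ (N - 1) * M) (𝓝 0) (𝓝 0) := by
    have hcont : Continuous fun δ : ℝ => δ ^ (N - 1) * M := by fun_prop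
    simpa [Nat.sub_ne_zero_of_lt hN] using hcont.tendsto 0
  have htail := tendsto_setIntegral_Ioc_sub_nhds_zero hs0
    ((hglim.mono_set (Ioc_subset_Ioc le_rfl hs1)).abs)
  have hsmall : ∀ᶠ δ in 𝓝[>] 0, (δ < s ∧ δ ^ (N - 1) * M < ε ^ N ∧
      ∫ t in Ioc (s - δ) s, |glim t| < ε) ∧ 0 < δ :=
    (((eventually_lt_nhds hs0).and ((hpow.eventually (gt_mem_nhds (pow_pos hε N))).and
      (htail.eventually (gt_mem_nhds hε)))).filter_mono nhdsWithin_le_nhds).and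
      self_mem_nhdsWithin
  obtain ⟨δ, ⟨hδs, hδM, hδglim⟩, hδ⟩ := hsmall.exists
  refine ⟨fun n => ∫ t in Ioc 0 1, g n t * cutoff s δ t, ∫ t in Ioc 0 1, glim t * cutoff s δ t,
    hweak _ (continuous_cutoff s δ), fun n => ?_, ?_⟩
  · rw [dist_comm, Real.dist_eq]
    refine (abs_setIntegral_mul_cutoff_sub_le (hg n) hδ hδs.le hs1).trans <|
      le_of_pow_le_pow_left₀ (Nat.ne_zero_of_lt hN) hε.le ?_
    calc (∫ t in Ioc (s - δ) s, |g n t|) ^ N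
        ≤ (s - (s - δ)) ^ (N - 1) * ∫ t in Ioc 0 1, |g n t| ^ N :=
          pow_setIntegral_Ioc_abs_le (by omega) (hg n) (hgN n) (by linarith) (by linarith) hs1
      _ ≤ δ ^ (N - 1) * M := by
          rw [sub_sub_cancel]; exact mul_le_mul_of_nonneg_left (hM n) (pow_nonneg hδ.le _)
      _ ≤ ε ^ N := hδM.le
  · rw [Real.dist_eq]
    exact (abs_setIntegral_mul_cutoff_sub_le hglim hδ hδs.le hs1).trans hδglim.le

namespace MemEN

variable {N : ℕ} {u g : ℝ → ℝ}

theorem eq_setIntegral (h : MemEN N u g) {s : ℝ} (hs : s ∈ Icc 0 1) :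
    u s = ∫ t in Ioc 0 s, g t := by
  rw [h.1 s hs, intervalIntegral.integral_of_le hs.1]

theorem continuousOn (h : MemEN N u g) : ContinuousOn u (Icc 0 1) := by
  have := intervalIntegral.continuousOn_primitive_interval' h.2.2.1 left_mem_uIcc
  rw [uIcc_of_le zero_le_one] at this
  exact this.congr h.1

theorem pow_le (h : MemEN N u g) (hN : N ≠ 0) {s : ℝ} (hs : s ∈ Icc 0 1) :
    u s ^ N ≤ s ^ (N - 1) := by
  calc u s ^ N ≤ |u s| ^ N := by rw [← abs_pow]; exact le_abs_self _
    _ ≤ (∫ t in Ioc 0 s, |g t|) ^ N := by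
        rw [h.eq_setIntegral hs]; gcongr; exact abs_integral_le_integral_abs
    _ ≤ (s - 0) ^ (N - 1) * ∫ t in Ioc 0 1, |g t| ^ N :=
        pow_setIntegral_Ioc_abs_le hN h.2.2.1.1 h.2.2.2.1 le_rfl hs.1 hs.2
    _ = s ^ (N - 1) := by rw [h.2.2.2.2, sub_zero, mul_one]

end MemEN

theorem exp_mul_log_exp_div_mul_le {β s x : ℝ} (hβ : 0 ≤ β) (hs : s ∈ Ioc 0 1) (hx : x ≤ 1) :
    exp (β * log (exp 1 / s) * x) ≤ exp β * s ^ (-β) := by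
  have hlog : 0 ≤ log (exp 1 / s) :=
    log_nonneg <| (one_le_div hs.1).2 <| hs.2.trans (one_le_exp zero_le_one)
  calc exp (β * log (exp 1 / s) * x) ≤ exp (β * log (exp 1 / s)) :=
        exp_le_exp.2 (mul_le_of_le_one_right (mul_nonneg hβ hlog) hx)
    _ = exp β * s ^ (-β) := by
        rw [log_div (exp_ne_zero 1) hs.1.ne', log_exp, rpow_def_of_pos hs.1, ← exp_add]
        ring_nf

theorem tendsto_Ifun_of_tendsto {N : ℕ} {β : ℝ} (hβ0 : 0 ≤ β) (hβ1 : β < 1)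
    {v : ℕ → ℝ → ℝ} {w : ℝ → ℝ}
    (hmeas : ∀ n, AEStronglyMeasurable (v n) (volume.restrict (Ioc 0 1)))
    (hbound : ∀ n, ∀ s ∈ Ioc (0 : ℝ) 1, v n s ^ N ≤ s ^ (N - 1))
    (hlim : ∀ s ∈ Ioc (0 : ℝ) 1, Tendsto (fun n => v n s) atTop (𝓝 (w s))) :
    Tendsto (fun n => Ifun N β (v n)) atTop (𝓝 (Ifun N β w)) := by
  refine tendsto_integral_of_dominated_convergence (fun s => exp β * s ^ (-β))
    (fun n => ?_) ?_ (fun n => ?_) ?_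
  · have := (hmeas n).aemeasurable
    fun_prop
  · exact (intervalIntegral.intervalIntegrable_rpow' (by linarith)).1.const_mul _
  · refine ae_restrict_of_forall_mem measurableSet_Ioc fun s hs => ?_
    rw [norm_of_nonneg (exp_pos _).le]
    exact exp_mul_log_exp_div_mul_le hβ0 hs ((div_le_one (pow_pos hs.1 _)).2 (hbound n s hs))
  · refine ae_restrict_of_forall_mem measurableSet_Ioc fun s hs => ?_
    exact (((hlim s hs).pow N).div_const _ |>.const_mul _).rexp

/-- for `0 < β < 1`, the functional `I_β` is weakly continuous on `E_N`:
if `u n ∈ E_N` (with weak derivatives `g n`) converges weakly in `W^{1,N}(0,1)` to `ulim`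
(with weak derivative `glim`) — weak convergence being expressed by convergence of the
pairings of `u n` and of `g n` against every continuous test function — then
`I_β (u n) → I_β (ulim)`. -/
theorem Ifun_weakly_continuous (N : ℕ) (hN : 2 ≤ N) (β : ℝ) (hβ0 : 0 < β) (hβ : β < 1)
    (u g : ℕ → ℝ → ℝ) (hu : ∀ n, MemEN N (u n) (g n))
    (ulim glim : ℝ → ℝ)
    (hrep : ∀ s ∈ Set.Icc (0:ℝ) 1, ulim s = ∫ t in (0:ℝ)..s, glim t)
    (hint : IntervalIntegrable glim MeasureTheory.volume 0 1)
    (hweak : ∀ φ : ℝ → ℝ, ContinuousOn φ (Set.Icc 0 1) →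
      Filter.Tendsto (fun n => ∫ t in Set.Ioc (0:ℝ) 1, u n t * φ t) Filter.atTop
        (nhds (∫ t in Set.Ioc (0:ℝ) 1, ulim t * φ t)) ∧
      Filter.Tendsto (fun n => ∫ t in Set.Ioc (0:ℝ) 1, g n t * φ t) Filter.atTop
        (nhds (∫ t in Set.Ioc (0:ℝ) 1, glim t * φ t))) :
    Filter.Tendsto (fun n => Ifun N β (u n)) Filter.atTop (nhds (Ifun N β ulim)) := by
  refine tendsto_Ifun_of_tendsto hβ0.le hβ
    (fun n => ((hu n).continuousOn.mono Ioc_subset_Icc_self).aestronglyMeasurable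
      measurableSet_Ioc)
    (fun n s hs => (hu n).pow_le (by omega) (Ioc_subset_Icc_self hs)) fun s hs => ?_
  rw [hrep s (Ioc_subset_Icc_self hs), intervalIntegral.integral_of_le hs.1.le]
  refine (tendsto_setIntegral_Ioc_of_tendsto_integral_mul (by omega) (fun n => (hu n).2.2.1.1)
    (fun n => (hu n).2.2.2.1) (fun n => (hu n).2.2.2.2.le) hint.1
    (fun φ hφ => (hweak φ hφ.continuousOn).2) hs).congr fun n => ?_
  exact ((hu n).eq_setIntegral (Ioc_subset_Icc_self hs)).symm
end

section
/- Let N ≥ 2 be an integer and β > 1. Then along the infinitesimal Moser sequence w_j one has I_β(w_j) = ∫₀¹ exp( β · log(e/s) · w_j(s)^N / s^{N−1} ) ds → +∞ as j → ∞. In particular sup_{v ∈ E_N} I_β(v) = +∞ for every β > 1. -/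
open MeasureTheory Real Set Filter

/-- The infinitesimal Moser sequence `w_j`. -/
noncomputable def moser (N j : ℕ) (t : ℝ) : ℝ :=
  if t ≤ 1 / (j : ℝ) then (j : ℝ) ^ ((1:ℝ) / N) * t
  else (j : ℝ) ^ (-(((N:ℝ) - 1) / N))

/-!
Writing `w_j(s) = j^{1/N} min(s, 1/j)`, the exponent of `I_β(w_j)` equals `β log(e/s) · j s` on
`(0, 1/j]`. For a fixed `a ∈ (1/β, 1)` it is at least `β a (1 + log j)` on `(a/j, 1/j]`, so
`I_β(w_j) ≥ (1 - a) e^{βa} j^{βa - 1} → ∞`. Each `w_j` lies in `E_N` with derivative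
`j^{1/N} 1_{s ≤ 1/j}`, so `I_β` is unbounded on `E_N`.
-/

lemma setIntegral_Ioc_indicator_Iic_const {s c : ℝ} (hs : 0 ≤ s) (hc : 0 ≤ c) (k : ℝ) :
    ∫ t in Ioc 0 s, (Iic c).indicator (fun _ => k) t = k * min s c := by
  rw [setIntegral_indicator measurableSet_Iic, Ioc_inter_Iic, setIntegral_const,
    measureReal_def, volume_Ioc, sub_zero, ENNReal.toReal_ofReal (le_min hs hc), smul_eq_mul,
    mul_comm]

lemma pow_div_pow_sub_one {N : ℕ} (hN : N ≠ 0) {s : ℝ} (hs : s ≠ 0) :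
    s ^ N / s ^ (N - 1) = s := by
  rw [← pow_sub_one_mul hN, mul_div_cancel_left₀ _ (pow_ne_zero _ hs)]

section Moser

variable {N j : ℕ} (hN : N ≠ 0) (hj : j ≠ 0)
include hN hj

lemma moser_eq_mul_min (s : ℝ) : moser N j s = (j : ℝ) ^ ((1 : ℝ) / N) * min s (1 / j) := by
  have hj' : (0 : ℝ) < j := by positivity
  unfold moser
  split_ifs with hs
  · rw [min_eq_left hs]
  · rw [min_eq_right (not_le.mp hs).le, one_div (j : ℝ), ← rpow_neg_one, ← rpow_add hj']
    congr 1
    field_simp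
    ring

lemma moser_pow (s : ℝ) : moser N j s ^ N = j * min s (1 / j) ^ N := by
  rw [moser_eq_mul_min hN hj, mul_pow, one_div (N : ℝ),
    rpow_inv_natCast_pow (Nat.cast_nonneg j) hN]

lemma moser_pow_div_pow_of_le {s : ℝ} (hs : 0 < s) (hsj : s ≤ 1 / j) :
    moser N j s ^ N / s ^ (N - 1) = j * s := by
  rw [moser_pow hN hj, min_eq_left hsj, mul_div_assoc, pow_div_pow_sub_one hN hs.ne']

lemma moser_pow_div_pow_le {s : ℝ} (hs : 0 < s) : moser N j s ^ N / s ^ (N - 1) ≤ j * s := by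
  have hj' : (0 : ℝ) < j := by positivity
  rw [moser_pow hN hj, mul_div_assoc]
  calc (j : ℝ) * (min s (1 / j) ^ N / s ^ (N - 1)) ≤ j * (s ^ N / s ^ (N - 1)) := by
        gcongr
        exact min_le_left _ _
    _ = j * s := by rw [pow_div_pow_sub_one hN hs.ne']

lemma log_exp_one_div_mul_moser_le {s : ℝ} (hs : s ∈ Ioc 0 1) :
    log (exp 1 / s) * (moser N j s ^ N / s ^ (N - 1)) ≤ j := by
  obtain ⟨hs₀, hs₁⟩ := hs
  rw [log_div (exp_ne_zero 1) hs₀.ne', log_exp]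
  have hlog : 1 - s⁻¹ ≤ log s := one_sub_inv_le_log_of_pos hs₀
  have hslog : s * (1 - log s) ≤ 1 := by
    have := mul_le_mul_of_nonneg_left hlog hs₀.le
    rw [mul_sub, mul_inv_cancel₀ hs₀.ne'] at this
    linarith
  calc (1 - log s) * (moser N j s ^ N / s ^ (N - 1)) ≤ (1 - log s) * (j * s) := by
        gcongr
        · linarith [log_nonpos hs₀.le hs₁]
        · exact moser_pow_div_pow_le hN hj hs₀
    _ = j * (s * (1 - log s)) := by ring
    _ ≤ j * 1 := by gcongr
    _ = j := mul_one _

lemma integrableOn_exp_moser {β : ℝ} (hβ : 0 ≤ β) :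
    IntegrableOn (fun s => exp (β * log (exp 1 / s) * (moser N j s ^ N / s ^ (N - 1))))
      (Ioc 0 1) := by
  have hmoser : Measurable (moser N j) := by
    rw [funext (moser_eq_mul_min hN hj)]
    fun_prop
  refine Measure.integrableOn_of_bounded (M := exp (β * j)) measure_Ioc_lt_top.ne
    (Measurable.aestronglyMeasurable (by fun_prop)) ?_
  filter_upwards [ae_restrict_mem measurableSet_Ioc] with s hs
  rw [norm_of_nonneg (exp_nonneg _), exp_le_exp, mul_assoc]
  exact mul_le_mul_of_nonneg_left (log_exp_one_div_mul_moser_le hN hj hs) hβ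

lemma exp_mul_rpow_le_exp_moser {β a s : ℝ} (hβ : 0 ≤ β) (ha : 0 ≤ a)
    (hs : s ∈ Ioc (a / j) (1 / j)) :
    exp (β * a) * (j : ℝ) ^ (β * a) ≤
      exp (β * log (exp 1 / s) * (moser N j s ^ N / s ^ (N - 1))) := by
  obtain ⟨hs₁, hs₂⟩ := hs
  have hj' : (0 : ℝ) < j := by positivity
  have hs₀ : 0 < s := lt_of_le_of_lt (by positivity) hs₁
  rw [moser_pow_div_pow_of_le hN hj hs₀ hs₂, log_div (exp_ne_zero 1) hs₀.ne', log_exp,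
    rpow_def_of_pos hj', ← exp_add, exp_le_exp]
  have hlog : 1 + log j ≤ 1 - log s := by
    have := log_le_log hs₀ hs₂
    rw [one_div, log_inv] at this
    linarith
  have hajs : a ≤ j * s := by
    rw [div_lt_iff₀ hj'] at hs₁
    linarith
  have hlogj : 0 ≤ log j := log_nonneg (by exact_mod_cast Nat.one_le_iff_ne_zero.mpr hj)
  calc β * a + log j * (β * a) = β * ((1 + log j) * a) := by ring
    _ ≤ β * ((1 - log s) * (j * s)) := by gcongr; linarith
    _ = β * (1 - log s) * (j * s) := by ring

lemma exp_mul_rpow_le_Ifun_moser {β a : ℝ} (hβ : 0 ≤ β) (ha₀ : 0 ≤ a) (ha₁ : a < 1) :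
    (1 - a) * exp (β * a) * (j : ℝ) ^ (β * a - 1) ≤ Ifun N β (moser N j) := by
  have hj' : (0 : ℝ) < j := by positivity
  have hj₁ : 1 / (j : ℝ) ≤ 1 := by
    rw [div_le_one hj']
    exact_mod_cast Nat.one_le_iff_ne_zero.mpr hj
  have hsub : Ioc (a / j) (1 / j) ⊆ Ioc 0 1 := Ioc_subset_Ioc (by positivity) hj₁
  have hint := integrableOn_exp_moser hN hj hβ
  have hvol : volume.real (Ioc (a / j) (1 / (j : ℝ))) = (1 - a) / j := by
    rw [measureReal_def, volume_Ioc, ENNReal.toReal_ofReal (sub_nonneg.mpr (by gcongr))]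
    ring
  calc (1 - a) * exp (β * a) * (j : ℝ) ^ (β * a - 1)
      = volume.real (Ioc (a / j) (1 / (j : ℝ))) * (exp (β * a) * (j : ℝ) ^ (β * a)) := by
        rw [hvol, rpow_sub_one hj'.ne']
        ring
    _ ≤ ∫ s in Ioc (a / j) (1 / j),
          exp (β * log (exp 1 / s) * (moser N j s ^ N / s ^ (N - 1))) :=
        setIntegral_ge_of_const_le measurableSet_Ioc measure_Ioc_lt_top.ne
          (fun _ => exp_mul_rpow_le_exp_moser hN hj hβ ha₀) (hint.mono_set hsub)
    _ ≤ Ifun N β (moser N j) :=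
        setIntegral_mono_set hint (.of_forall fun _ => (exp_pos _).le) (.of_forall hsub)

lemma memEN_moser :
    MemEN N (moser N j) ((Iic (1 / (j : ℝ))).indicator fun _ => (j : ℝ) ^ ((1 : ℝ) / N)) := by
  have hj₀ : (0 : ℝ) ≤ 1 / j := by positivity
  have hj₁ : 1 / (j : ℝ) ≤ 1 := by
    rw [div_le_one (by positivity)]
    exact_mod_cast Nat.one_le_iff_ne_zero.mpr hj
  have hpow :
      (fun t => |(Iic (1 / (j : ℝ))).indicator (fun _ => (j : ℝ) ^ ((1 : ℝ) / N)) t| ^ N) =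
        (Iic (1 / (j : ℝ))).indicator fun _ => (j : ℝ) := by
    ext t
    simp only [indicator_apply]
    split_ifs
    · rw [abs_of_nonneg (by positivity), one_div, rpow_inv_natCast_pow (Nat.cast_nonneg j) hN]
    · simp [hN]
  refine ⟨fun s hs => ?_, ?_, ?_, ?_, ?_⟩
  · rw [intervalIntegral.integral_of_le hs.1, setIntegral_Ioc_indicator_Iic_const hs.1 hj₀,
      moser_eq_mul_min hN hj]
  · rw [moser_eq_mul_min hN hj, min_eq_left hj₀, mul_zero]
  · rw [intervalIntegrable_iff_integrableOn_Ioc_of_le zero_le_one]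
    exact (integrableOn_const measure_Ioc_lt_top.ne).indicator measurableSet_Iic
  · rw [hpow]
    exact (integrableOn_const measure_Ioc_lt_top.ne).indicator measurableSet_Iic
  · rw [hpow, setIntegral_Ioc_indicator_Iic_const zero_le_one hj₀, min_eq_right hj₁,
      mul_one_div_cancel (by positivity)]

end Moser

lemma tendsto_Ifun_moser_atTop {N : ℕ} (hN : N ≠ 0) {β : ℝ} (hβ : 1 < β) :
    Tendsto (fun j : ℕ => Ifun N β (moser N j)) atTop atTop := by
  set a := (1 + β) / (2 * β)
  have hβa : β * a - 1 = (β - 1) / 2 := by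
    simp only [a]
    field_simp
    ring
  have ha₀ : 0 < a := by positivity
  have ha₁ : a < 1 := by
    rw [div_lt_one (by positivity)]
    linarith
  have hlower :
      Tendsto (fun j : ℕ => (1 - a) * exp (β * a) * (j : ℝ) ^ (β * a - 1)) atTop atTop :=
    ((tendsto_rpow_atTop (by linarith)).comp tendsto_natCast_atTop_atTop).const_mul_atTop
      (mul_pos (sub_pos.mpr ha₁) (exp_pos _))
  refine tendsto_atTop_mono' atTop ?_ hlower
  filter_upwards [eventually_ne_atTop 0] with j hj
  exact exp_mul_rpow_le_Ifun_moser hN hj (by linarith) ha₀.le ha₁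

/-- for `β > 1`, `I_β (w_j) → +∞` along the infinitesimal Moser sequence;
in particular the supremum of `I_β` over `E_N` is infinite. -/
theorem Ifun_moser_tendsto_atTop (N : ℕ) (hN : 2 ≤ N) (β : ℝ) (hβ : 1 < β) :
    Filter.Tendsto (fun j : ℕ => Ifun N β (moser N j)) Filter.atTop Filter.atTop ∧
    (∀ C : ℝ, ∃ u g : ℝ → ℝ, MemEN N u g ∧ C < Ifun N β u) := by
  have hN₀ : N ≠ 0 := by omega
  have htendsto := tendsto_Ifun_moser_atTop hN₀ hβ
  refine ⟨htendsto, fun C => ?_⟩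
  obtain ⟨j, hjC, hj⟩ :=
    ((htendsto.eventually_gt_atTop C).and (eventually_ne_atTop 0)).exists
  exact ⟨moser N j, _, memEN_moser hN₀ hj, hjC⟩
end

section
/- Let N ≥ 2 be an integer. Along the infinitesimal Moser sequence w_j, the critical functional J_1 satisfies liminf_{j→∞} J_1(w_j) ≥ e + 1 > 1 = J_1(0), while sup_j J_1(w_j) < ∞. In particular, J_1 fails to be weakly continuous along the infinitesimal Moser sequence (which converges weakly to 0), so the inequality sup_{v ∈ E_N} J_1(v) < ∞ is critical with loss of compactness. -/
/-! Write `φ(s) = log (e/s) + log log (e/s)` and `L_j = φ(1/j)`. On `(0, 1/j]` the exponent of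
`J_1(w_j)` is `φ(s) · j s`, which lies between `L_j · j s` and `L_j · j s + 1`, so that part of
the integral is comparable to `(e^{L_j} - 1)/(L_j j)`. The log log term is what makes this
converge to `e`: `e^{L_j} = e j (1 + log j)` while `L_j ∼ log j`. On `(1/j, 1]` the integrand
is at least `1`, which gives the extra `+ 1`, and at most `exp (L_j / (j s))`, whose integral
stays bounded. Since `J_1(0) = 1 < e + 1`, `J_1(w_j)` cannot converge to `J_1(0)`. -/

open MeasureTheory Real Set Filter

/-- The improved (log log) Bliss-Moser functional `J_γ`. -/
noncomputable def Jfun (N : ℕ) (γ : ℝ) (v : ℝ → ℝ) : ℝ :=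
  ∫ s in Set.Ioc (0:ℝ) 1,
    Real.exp ((Real.log (Real.exp 1 / s) + γ * Real.log (Real.log (Real.exp 1 / s))) *
      (v s ^ N / s ^ (N - 1)))

open Topology

noncomputable def logWeight (s : ℝ) : ℝ :=
  log (exp 1 / s) + 1 * log (log (exp 1 / s))

noncomputable def jIntegrand (N : ℕ) (v : ℝ → ℝ) (s : ℝ) : ℝ :=
  exp (logWeight s * (v s ^ N / s ^ (N - 1)))

theorem Jfun_one_eq (N : ℕ) (v : ℝ → ℝ) :
    Jfun N 1 v = ∫ s in Ioc 0 1, jIntegrand N v s := rfl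

section logWeight

variable {s k : ℝ}

theorem one_le_one_sub_log (hs : 0 < s) (hs1 : s ≤ 1) : 1 ≤ 1 - log s := by
  linarith [log_nonpos hs.le hs1]

theorem logWeight_eq (hs : 0 < s) : logWeight s = (1 - log s) + log (1 - log s) := by
  rw [logWeight, one_mul, log_div (exp_ne_zero 1) hs.ne', log_exp]

theorem logWeight_nonneg (hs : 0 < s) (hs1 : s ≤ 1) : 0 ≤ logWeight s := by
  have h := one_le_one_sub_log hs hs1
  rw [logWeight_eq hs]
  linarith [log_nonneg h]

theorem logWeight_antitoneOn : AntitoneOn logWeight (Ioc 0 1) := by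
  intro s hs t ht hst
  have hlog := log_le_log hs.1 hst
  have := log_le_log (by linarith [one_le_one_sub_log ht.1 ht.2])
    (by linarith : 1 - log t ≤ 1 - log s)
  rw [logWeight_eq hs.1, logWeight_eq ht.1]
  linarith

theorem exp_neg_one_le_half : exp (-1) ≤ 1 / 2 := by
  rw [exp_neg, inv_le_comm₀ (exp_pos 1) (by norm_num)]
  linarith [add_one_le_exp (1 : ℝ)]

/-- With `u = -log (k s)`, the weight grows by at most `2u` below `1/k`, and `2u e^{-u} ≤ 2/e`. -/
theorem logWeight_mul_le (hs : 0 < s) (hk : 1 ≤ k) (hks : k * s ≤ 1) :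
    logWeight s * (k * s) ≤ logWeight (1 / k) * (k * s) + 1 := by
  have hk0 : 0 < k := by linarith
  have hks0 : 0 < k * s := by positivity
  set u := -log (k * s) with hu
  have hu0 : 0 ≤ u := by linarith [log_nonpos hks0.le hks]
  have ha := one_le_one_sub_log (one_div_pos.2 hk0) ((div_le_one hk0).2 hk)
  have hsplit : 1 - log s = (1 - log (1 / k)) + u := by
    rw [hu, log_mul hk0.ne' hs.ne', one_div, log_inv]
    ring
  have hlog : log (1 - log s) ≤ log (1 - log (1 / k)) + u := by
    have := log_le_sub_one_of_pos (show 0 < (1 - log s) / (1 - log (1 / k)) by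
      rw [hsplit]; positivity)
    rw [log_div (by rw [hsplit]; positivity) (by positivity), hsplit, add_div,
      div_self (by positivity)] at this
    have : u / (1 - log (1 / k)) ≤ u := div_le_self hu0 ha
    rw [hsplit]
    linarith
  have hweight : logWeight s ≤ logWeight (1 / k) + 2 * u := by
    rw [logWeight_eq hs, logWeight_eq (by positivity)]
    linarith
  have hdecay : u * (k * s) ≤ 1 / 2 := by
    have hks_exp : k * s = exp (-u) := by rw [hu, neg_neg, exp_log hks0]
    rw [hks_exp]
    exact (mul_exp_neg_le_exp_neg_one u).trans exp_neg_one_le_half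
  nlinarith [mul_le_mul_of_nonneg_right hweight hks0.le]

end logWeight

theorem tendsto_div_add_log_self_atTop :
    Tendsto (fun a : ℝ => a / (a + log a)) atTop (𝓝 1) := by
  have h : Tendsto (fun a : ℝ => (1 + log a / a)⁻¹) atTop (𝓝 1) := by
    simpa using (tendsto_const_nhds.add
      isLittleO_log_id_atTop.tendsto_div_nhds_zero).inv₀ (by norm_num : (1 : ℝ) + 0 ≠ 0)
  refine h.congr' ?_
  filter_upwards [eventually_gt_atTop 0] with a ha
  field_simp

noncomputable def moserLevel (j : ℕ) : ℝ := logWeight (1 / j)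

noncomputable def moserRatio (j : ℕ) : ℝ := exp (moserLevel j) / (moserLevel j * j)

section moserLevel

variable {j : ℕ}

theorem moserLevel_eq (hj : 1 ≤ j) : moserLevel j = (1 + log j) + log (1 + log j) := by
  have hj0 : (0 : ℝ) < j := by exact_mod_cast hj
  rw [moserLevel, logWeight_eq (by positivity), one_div, log_inv, sub_neg_eq_add]

theorem one_le_one_add_log (hj : 1 ≤ j) : 1 ≤ 1 + log j := by
  linarith [log_nonneg (Nat.one_le_cast.2 hj : (1 : ℝ) ≤ j)]

theorem one_le_moserLevel (hj : 1 ≤ j) : 1 ≤ moserLevel j := by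
  have h := one_le_one_add_log hj
  rw [moserLevel_eq hj]
  linarith [log_nonneg h]

theorem moserRatio_eq (hj : 1 ≤ j) :
    moserRatio j = exp 1 * ((1 + log j) / ((1 + log j) + log (1 + log j))) := by
  have hj0 : (0 : ℝ) < j := by exact_mod_cast hj
  have hA : 0 < 1 + log j := by linarith [one_le_one_add_log hj]
  rw [moserRatio, ← moserLevel_eq hj]
  nth_rw 1 [moserLevel_eq hj]
  rw [exp_add, exp_add, exp_log hj0, exp_log hA]
  field_simp

theorem moserRatio_le (hj : 1 ≤ j) : moserRatio j ≤ exp 1 := by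
  have hlog := log_nonneg (one_le_one_add_log hj)
  rw [moserRatio_eq hj]
  refine mul_le_of_le_one_right (exp_pos 1).le ((div_le_one ?_).2 ?_) <;>
    linarith [one_le_one_add_log hj]

theorem tendsto_moserRatio : Tendsto moserRatio atTop (𝓝 (exp 1)) := by
  have hA : Tendsto (fun j : ℕ => 1 + log j) atTop atTop :=
    tendsto_atTop_add_const_left _ 1 (tendsto_log_atTop.comp tendsto_natCast_atTop_atTop)
  have h := (tendsto_div_add_log_self_atTop.comp hA).const_mul (exp 1)
  rw [mul_one] at h
  refine h.congr' ?_
  filter_upwards [eventually_ge_atTop 1] with j hj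
  exact (moserRatio_eq hj).symm

end moserLevel

/-- On `[1, 2]` use the chord of the convex function `L / t`; on `[2, L]` use
`exp (L / t) ≤ exp (L / 2)` and `L ^ 3 ≤ 48 exp (L / 2)`; beyond `L`, `L / t ≤ 1`. -/
theorem exp_div_le {L t : ℝ} (hL : 1 ≤ L) (ht : 1 ≤ t) :
    exp (L / t) ≤
      exp (3 / 2 * L) * exp (-(L / 2) * t) + 48 * exp L / L * (t ^ 2)⁻¹ + exp 1 := by
  have ht0 : 0 < t := by linarith
  have hL0 : 0 < L := by linarith
  have h1 : 0 ≤ exp (3 / 2 * L) * exp (-(L / 2) * t) := by positivity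
  have h2 : 0 ≤ 48 * exp L / L * (t ^ 2)⁻¹ := by positivity
  have h3 : 0 ≤ exp 1 := (exp_pos 1).le
  rcases le_or_gt t 2 with ht2 | ht2
  · have chord : L / t ≤ 3 / 2 * L + -(L / 2) * t := by
      rw [div_le_iff₀ ht0]
      nlinarith [mul_nonneg (mul_nonneg hL0.le (by linarith : 0 ≤ t - 1))
        (by linarith : 0 ≤ 2 - t)]
    have := exp_le_exp.2 chord
    rw [exp_add] at this
    linarith
  rcases le_or_gt t L with htL | htL
  · have hcube : L ^ 3 ≤ 48 * exp (L / 2) := by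
      have h := sum_le_exp_of_nonneg (by positivity : 0 ≤ L / 2) 4
      simp only [Finset.sum_range_succ, Finset.sum_range_zero, Nat.factorial] at h
      norm_num at h
      nlinarith [h]
    have hexp : exp L = exp (L / 2) * exp (L / 2) := by rw [← exp_add, add_halves]
    have hhalf : exp (L / t) ≤ exp (L / 2) :=
      exp_le_exp.2 (by rw [div_le_iff₀ ht0]; nlinarith)
    have hmid : exp (L / 2) ≤ 48 * exp L / L * (t ^ 2)⁻¹ := by
      rw [← div_eq_mul_inv, div_div, le_div_iff₀ (by positivity), hexp]
      have : L * t ^ 2 ≤ L ^ 3 := by nlinarith [mul_le_mul_of_nonneg_left htL hL0.le]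
      nlinarith [exp_pos (L / 2), mul_le_mul_of_nonneg_left this (exp_pos (L / 2)).le]
    linarith
  · have : exp (L / t) ≤ exp 1 := exp_le_exp.2 (by rw [div_le_iff₀ ht0]; linarith)
    linarith

theorem integral_exp_div_le {L T : ℝ} (hL : 1 ≤ L) (hT : 1 ≤ T) :
    ∫ t in (1 : ℝ)..T, exp (L / t) ≤ 50 * exp L / L + exp 1 * T := by
  have hL0 : 0 < L := by linarith
  have hpos : ∀ t ∈ uIcc 1 T, t ≠ 0 := fun t ht => by
    rw [uIcc_of_le hT] at ht; linarith [ht.1]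
  have hsq_cont : ContinuousOn (fun t : ℝ => (t ^ 2)⁻¹) (uIcc 1 T) :=
    (continuousOn_pow 2).inv₀ fun t ht => pow_ne_zero 2 (hpos t ht)
  have hexp : ∫ t in (1 : ℝ)..T, exp (-(L / 2) * t)
      = (exp (-(L / 2)) - exp (-(L / 2) * T)) / (L / 2) := by
    rw [intervalIntegral.integral_comp_mul_left (fun t => exp t) (by linarith), integral_exp,
      smul_eq_mul, mul_one]
    field_simp
    ring
  have hsq : ∫ t in (1 : ℝ)..T, (t ^ 2)⁻¹ = 1 - T⁻¹ := by
    have hderiv : ∀ t ∈ uIcc 1 T, HasDerivAt (fun t : ℝ => -t⁻¹) (t ^ 2)⁻¹ t := by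
      intro t ht
      simpa using (hasDerivAt_inv (hpos t ht)).fun_neg
    rw [intervalIntegral.integral_eq_sub_of_hasDerivAt hderiv hsq_cont.intervalIntegrable, inv_one]
    ring
  have hi1 : IntervalIntegrable (fun t => exp (3 / 2 * L) * exp (-(L / 2) * t)) volume 1 T := by
    apply Continuous.intervalIntegrable; fun_prop
  have hi2 : IntervalIntegrable (fun t : ℝ => 48 * exp L / L * (t ^ 2)⁻¹) volume 1 T :=
    (continuousOn_const.mul hsq_cont).intervalIntegrable
  calc ∫ t in (1 : ℝ)..T, exp (L / t)
      ≤ ∫ t in (1 : ℝ)..T,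
          (exp (3 / 2 * L) * exp (-(L / 2) * t) + 48 * exp L / L * (t ^ 2)⁻¹ + exp 1) := by
        refine intervalIntegral.integral_mono_on hT ?_ ((hi1.add hi2).add intervalIntegrable_const)
          fun t ht => exp_div_le hL ht.1
        exact ContinuousOn.intervalIntegrable
          ((continuousOn_const.div continuousOn_id hpos).rexp)
    _ = exp (3 / 2 * L) * ((exp (-(L / 2)) - exp (-(L / 2) * T)) / (L / 2))
          + 48 * exp L / L * (1 - T⁻¹) + exp 1 * (T - 1) := by
        rw [intervalIntegral.integral_add (hi1.add hi2) intervalIntegrable_const,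
          intervalIntegral.integral_add hi1 hi2, intervalIntegral.integral_const_mul,
          intervalIntegral.integral_const_mul, hexp, hsq, intervalIntegral.integral_const,
          smul_eq_mul, mul_comm (T - 1)]
    _ ≤ 50 * exp L / L + exp 1 * T := by
        have hprod : exp (3 / 2 * L) * exp (-(L / 2)) = exp L := by
          rw [← exp_add]; ring_nf
        have hdecay : exp (3 / 2 * L) * ((exp (-(L / 2)) - exp (-(L / 2) * T)) / (L / 2))
            ≤ 2 * exp L / L := by
          rw [mul_div_assoc', mul_sub, hprod, div_le_div_iff₀ (by positivity) hL0]
          nlinarith [exp_pos (3 / 2 * L), exp_pos (-(L / 2) * T),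
            mul_pos (exp_pos (3 / 2 * L)) (exp_pos (-(L / 2) * T))]
        have hinv : 48 * exp L / L * (1 - T⁻¹) ≤ 48 * exp L / L :=
          mul_le_of_le_one_right (by positivity) (by linarith [inv_pos.2 (by linarith : 0 < T)])
        have hsplit : 50 * exp L / L = 2 * exp L / L + 48 * exp L / L := by ring
        nlinarith [exp_pos 1]

section moser

variable {N j : ℕ} {s : ℝ}

theorem moser_pow_div_of_le (hN : N ≠ 0) (hs : 0 < s) (hsj : s ≤ 1 / j) :
    moser N j s ^ N / s ^ (N - 1) = j * s := by
  have hroot : ((j : ℝ) ^ ((1 : ℝ) / N)) ^ N = j := by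
    rw [← rpow_natCast, ← rpow_mul (Nat.cast_nonneg j), one_div,
      inv_mul_cancel₀ (Nat.cast_ne_zero.2 hN), rpow_one]
  rw [moser, if_pos hsj, mul_pow, hroot, ← pow_sub_one_mul hN s]
  field_simp

theorem moser_pow_div_of_lt (hN : N ≠ 0) (hsj : 1 / j < s) :
    moser N j s ^ N / s ^ (N - 1) = ((j * s) ^ (N - 1))⁻¹ := by
  have hpow : ((j : ℝ) ^ (-(((N : ℝ) - 1) / N))) ^ N = ((j : ℝ) ^ (N - 1))⁻¹ := by
    rw [← rpow_natCast, ← rpow_mul (Nat.cast_nonneg j),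
      show -(((N : ℝ) - 1) / N) * N = -((N - 1 : ℕ) : ℝ) by
        rw [Nat.cast_sub (Nat.one_le_iff_ne_zero.2 hN)]; field_simp; ring,
      rpow_neg (Nat.cast_nonneg j), rpow_natCast]
  rw [moser, if_neg (not_le.2 hsj), hpow, mul_pow, div_eq_mul_inv, ← mul_inv]

theorem exp_le_jIntegrand_moser (hN : N ≠ 0) (hj : 1 ≤ j) (hs : 0 < s) (hsj : s ≤ 1 / j) :
    exp (moserLevel j * (j * s)) ≤ jIntegrand N (moser N j) s := by
  have hj1 : (1 : ℝ) / j ≤ 1 := (div_le_one (by positivity)).2 (Nat.one_le_cast.2 hj)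
  rw [jIntegrand, moser_pow_div_of_le hN hs hsj]
  gcongr
  exact logWeight_antitoneOn ⟨hs, hsj.trans hj1⟩ ⟨hs.trans_le hsj, hj1⟩ hsj

theorem jIntegrand_moser_le_of_le (hN : N ≠ 0) (hj : 1 ≤ j) (hs : 0 < s) (hsj : s ≤ 1 / j) :
    jIntegrand N (moser N j) s ≤ exp (moserLevel j * (j * s) + 1) := by
  have hjs : (j : ℝ) * s ≤ 1 := by
    rwa [le_div_iff₀ (by positivity), mul_comm] at hsj
  rw [jIntegrand, moser_pow_div_of_le hN hs hsj]
  exact exp_le_exp.2 (logWeight_mul_le hs (Nat.one_le_cast.2 hj) hjs)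

theorem one_le_jIntegrand_moser (hN : N ≠ 0) (hsj : 1 / j < s) (hs1 : s ≤ 1) :
    1 ≤ jIntegrand N (moser N j) s := by
  have hs : 0 < s := lt_of_le_of_lt (by positivity) hsj
  rw [jIntegrand, moser_pow_div_of_lt hN hsj]
  exact one_le_exp (mul_nonneg (logWeight_nonneg hs hs1) (by positivity))

theorem jIntegrand_moser_le_of_lt (hN : 2 ≤ N) (hj : 1 ≤ j) (hsj : 1 / j < s) (hs1 : s ≤ 1) :
    jIntegrand N (moser N j) s ≤ exp (moserLevel j / (j * s)) := by
  have hj0 : (0 : ℝ) < j := by exact_mod_cast hj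
  have hs : 0 < s := lt_of_le_of_lt (by positivity) hsj
  have hjs : 1 ≤ (j : ℝ) * s := by
    rw [div_lt_iff₀ hj0, mul_comm] at hsj; exact hsj.le
  have hweight : logWeight s ≤ moserLevel j :=
    logWeight_antitoneOn ⟨by positivity, hsj.le.trans hs1⟩ ⟨hs, hs1⟩ hsj.le
  rw [jIntegrand, moser_pow_div_of_lt (by omega) hsj, ← div_eq_mul_inv]
  gcongr
  · exact (one_pos.trans_le (one_le_moserLevel hj)).le
  · exact le_self_pow₀ hjs (by omega)

end moser

section moserIntegral

variable {N j : ℕ}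

theorem measurable_moser : Measurable (moser N j) :=
  Measurable.ite (measurableSet_le measurable_id measurable_const)
    (measurable_const.mul measurable_id) measurable_const

theorem measurable_jIntegrand {v : ℝ → ℝ} (hv : Measurable v) :
    Measurable (jIntegrand N v) := by
  unfold jIntegrand logWeight
  fun_prop

theorem jIntegrand_pos (N : ℕ) (v : ℝ → ℝ) (s : ℝ) : 0 < jIntegrand N v s := exp_pos _

theorem jIntegrand_moser_le_exp (hN : 2 ≤ N) (hj : 1 ≤ j) {s : ℝ} (hs : s ∈ Ioc 0 1) :
    jIntegrand N (moser N j) s ≤ exp (moserLevel j + 1) := by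
  have hL := one_le_moserLevel hj
  rcases le_or_gt s (1 / j) with hsj | hsj
  · refine (jIntegrand_moser_le_of_le (by omega) hj hs.1 hsj).trans (exp_le_exp.2 ?_)
    have hjs : (j : ℝ) * s ≤ 1 := by rwa [le_div_iff₀ (by positivity), mul_comm] at hsj
    nlinarith [mul_pos (Nat.cast_pos.2 hj) hs.1]
  · refine (jIntegrand_moser_le_of_lt hN hj hsj hs.2).trans (exp_le_exp.2 ?_)
    have hjs : 1 ≤ (j : ℝ) * s := by
      rw [div_lt_iff₀ (Nat.cast_pos.2 hj), mul_comm] at hsj; exact hsj.le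
    linarith [div_le_self (by linarith : 0 ≤ moserLevel j) hjs]

theorem integrableOn_jIntegrand_moser (hN : 2 ≤ N) (hj : 1 ≤ j) :
    IntegrableOn (jIntegrand N (moser N j)) (Ioc 0 1) := by
  refine Measure.integrableOn_of_bounded (M := exp (moserLevel j + 1)) measure_Ioc_lt_top.ne
    (measurable_jIntegrand measurable_moser).aestronglyMeasurable ?_
  filter_upwards [ae_restrict_mem measurableSet_Ioc] with s hs
  rw [norm_of_nonneg (jIntegrand_pos N _ s).le]
  exact jIntegrand_moser_le_exp hN hj hs

theorem Jfun_one_moser_eq_add (hN : 2 ≤ N) (hj : 1 ≤ j) :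
    Jfun N 1 (moser N j) = (∫ s in Ioc (0 : ℝ) (1 / j), jIntegrand N (moser N j) s)
      + ∫ s in Ioc (1 / (j : ℝ)) 1, jIntegrand N (moser N j) s := by
  have hj0 : (0 : ℝ) ≤ 1 / j := by positivity
  have hj1 : (1 : ℝ) / j ≤ 1 := (div_le_one (by positivity)).2 (Nat.one_le_cast.2 hj)
  have hint := integrableOn_jIntegrand_moser hN hj
  rw [Jfun_one_eq, ← Ioc_union_Ioc_eq_Ioc hj0 hj1, setIntegral_union
    (Ioc_disjoint_Ioc_of_le le_rfl) measurableSet_Ioc (hint.mono_set (Ioc_subset_Ioc_right hj1))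
    (hint.mono_set (Ioc_subset_Ioc_left hj0))]

theorem integral_exp_moserLevel (hj : 1 ≤ j) :
    ∫ s in Ioc (0 : ℝ) (1 / j), exp (moserLevel j * (j * s))
      = (exp (moserLevel j) - 1) / (moserLevel j * j) := by
  have hj0 : (0 : ℝ) < j := Nat.cast_pos.2 hj
  have hLj : moserLevel j * j ≠ 0 := (mul_pos (one_pos.trans_le (one_le_moserLevel hj)) hj0).ne'
  simp_rw [← mul_assoc]
  rw [← intervalIntegral.integral_of_le (by positivity),
    intervalIntegral.integral_comp_mul_left (fun t => exp t) hLj, integral_exp, smul_eq_mul]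
  field_simp
  simp

end moserIntegral

section moserBounds

variable {N j : ℕ}

theorem moserRatio_sub_le_integral_inner (hN : 2 ≤ N) (hj : 1 ≤ j) :
    moserRatio j - 1 / j ≤ ∫ s in Ioc (0 : ℝ) (1 / j), jIntegrand N (moser N j) s := by
  have hj0 : (0 : ℝ) < j := Nat.cast_pos.2 hj
  have hL := one_le_moserLevel hj
  have hj1 : (1 : ℝ) / j ≤ 1 := (div_le_one hj0).2 (Nat.one_le_cast.2 hj)
  calc moserRatio j - 1 / j ≤ (exp (moserLevel j) - 1) / (moserLevel j * j) := by
        rw [moserRatio, sub_div]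
        exact sub_le_sub_left (one_div_le_one_div_of_le hj0 (le_mul_of_one_le_left hj0.le hL)) _
    _ = ∫ s in Ioc (0 : ℝ) (1 / j), exp (moserLevel j * (j * s)) :=
        (integral_exp_moserLevel hj).symm
    _ ≤ ∫ s in Ioc (0 : ℝ) (1 / j), jIntegrand N (moser N j) s :=
        setIntegral_mono_on (Continuous.integrableOn_Ioc (by fun_prop))
          ((integrableOn_jIntegrand_moser hN hj).mono_set (Ioc_subset_Ioc_right hj1))
          measurableSet_Ioc fun s hs => exp_le_jIntegrand_moser (by omega) hj hs.1 hs.2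

theorem integral_inner_le (hN : 2 ≤ N) (hj : 1 ≤ j) :
    ∫ s in Ioc (0 : ℝ) (1 / j), jIntegrand N (moser N j) s ≤ exp 1 * moserRatio j := by
  have hj0 : (0 : ℝ) < j := Nat.cast_pos.2 hj
  have hL := one_le_moserLevel hj
  have hj1 : (1 : ℝ) / j ≤ 1 := (div_le_one hj0).2 (Nat.one_le_cast.2 hj)
  calc ∫ s in Ioc (0 : ℝ) (1 / j), jIntegrand N (moser N j) s
      ≤ ∫ s in Ioc (0 : ℝ) (1 / j), exp 1 * exp (moserLevel j * (j * s)) :=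
        setIntegral_mono_on
          ((integrableOn_jIntegrand_moser hN hj).mono_set (Ioc_subset_Ioc_right hj1))
          (Continuous.integrableOn_Ioc (by fun_prop)) measurableSet_Ioc fun s hs => by
            rw [← exp_add, add_comm]
            exact jIntegrand_moser_le_of_le (by omega) hj hs.1 hs.2
    _ = exp 1 * ((exp (moserLevel j) - 1) / (moserLevel j * j)) := by
        rw [integral_const_mul, integral_exp_moserLevel hj]
    _ ≤ exp 1 * moserRatio j := by
        rw [moserRatio]
        gcongr
        linarith

theorem one_sub_le_integral_outer (hN : 2 ≤ N) (hj : 1 ≤ j) :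
    1 - 1 / j ≤ ∫ s in Ioc (1 / (j : ℝ)) 1, jIntegrand N (moser N j) s := by
  have hj0 : (0 : ℝ) < j := Nat.cast_pos.2 hj
  have hj1 : (1 : ℝ) / j ≤ 1 := (div_le_one hj0).2 (Nat.one_le_cast.2 hj)
  calc 1 - 1 / (j : ℝ) = ∫ _ in Ioc (1 / (j : ℝ)) 1, (1 : ℝ) := by
        rw [setIntegral_const, volume_real_Ioc_of_le hj1, smul_eq_mul, mul_one]
    _ ≤ ∫ s in Ioc (1 / (j : ℝ)) 1, jIntegrand N (moser N j) s :=
        setIntegral_mono_on (integrableOn_const measure_Ioc_lt_top.ne)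
          ((integrableOn_jIntegrand_moser hN hj).mono_set (Ioc_subset_Ioc_left (by positivity)))
          measurableSet_Ioc fun s hs => one_le_jIntegrand_moser (by omega) hs.1 hs.2

theorem integral_outer_le (hN : 2 ≤ N) (hj : 1 ≤ j) :
    ∫ s in Ioc (1 / (j : ℝ)) 1, jIntegrand N (moser N j) s ≤ 50 * moserRatio j + exp 1 := by
  have hj0 : (0 : ℝ) < j := Nat.cast_pos.2 hj
  have hL := one_le_moserLevel hj
  have hj1 : (1 : ℝ) / j ≤ 1 := (div_le_one hj0).2 (Nat.one_le_cast.2 hj)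
  have hcont : ContinuousOn (fun s : ℝ => exp (moserLevel j / (j * s))) (Icc (1 / j) 1) :=
    (continuousOn_const.div (continuousOn_const.mul continuousOn_id) fun s hs =>
      (mul_pos hj0 ((one_div_pos.2 hj0).trans_le hs.1)).ne').rexp
  calc ∫ s in Ioc (1 / (j : ℝ)) 1, jIntegrand N (moser N j) s
      ≤ ∫ s in Ioc (1 / (j : ℝ)) 1, exp (moserLevel j / (j * s)) :=
        setIntegral_mono_on
          ((integrableOn_jIntegrand_moser hN hj).mono_set (Ioc_subset_Ioc_left (by positivity)))
          (hcont.integrableOn_Icc.mono_set Ioc_subset_Icc_self) measurableSet_Ioc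
          fun s hs => jIntegrand_moser_le_of_lt hN hj hs.1 hs.2
    _ = (j : ℝ)⁻¹ * ∫ t in (1 : ℝ)..j, exp (moserLevel j / t) := by
        rw [← intervalIntegral.integral_of_le hj1,
          intervalIntegral.integral_comp_mul_left (fun t => exp (moserLevel j / t)) hj0.ne',
          smul_eq_mul, mul_one_div_cancel hj0.ne', mul_one]
    _ ≤ (j : ℝ)⁻¹ * (50 * exp (moserLevel j) / moserLevel j + exp 1 * j) := by
        gcongr
        exact integral_exp_div_le hL (Nat.one_le_cast.2 hj)
    _ = 50 * moserRatio j + exp 1 := by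
        rw [moserRatio]
        field_simp

end moserBounds

theorem Jfun_one_eq_one_of_eqOn_zero {N : ℕ} (hN : N ≠ 0) {v : ℝ → ℝ}
    (hv : EqOn v 0 (Ioc 0 1)) :
    Jfun N 1 v = 1 := by
  rw [Jfun_one_eq, setIntegral_congr_fun measurableSet_Ioc (g := fun _ => 1) fun s hs => by
      rw [jIntegrand, hv hs, Pi.zero_apply, zero_pow hN, zero_div, mul_zero, exp_zero],
    setIntegral_const, volume_real_Ioc_of_le zero_le_one, smul_eq_mul, mul_one, sub_zero]

theorem moser_zero_apply {N : ℕ} (hN : 2 ≤ N) {s : ℝ} (hs : 0 < s) : moser N 0 s = 0 := by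
  have hexp : -(((N : ℝ) - 1) / N) ≠ 0 := by
    have : (2 : ℝ) ≤ N := by exact_mod_cast hN
    exact neg_ne_zero.2 (div_ne_zero (by linarith) (by linarith))
  rw [moser, if_neg (by simpa using hs), Nat.cast_zero, zero_rpow hexp]

theorem moserRatio_add_one_sub_le_Jfun {N j : ℕ} (hN : 2 ≤ N) (hj : 1 ≤ j) :
    moserRatio j + 1 - 2 / j ≤ Jfun N 1 (moser N j) := by
  have htwo : (2 : ℝ) / j = 1 / j + 1 / j := by ring
  rw [Jfun_one_moser_eq_add hN hj]
  linarith [moserRatio_sub_le_integral_inner hN hj, one_sub_le_integral_outer hN hj]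

theorem Jfun_one_moser_le {N : ℕ} (hN : 2 ≤ N) (j : ℕ) :
    Jfun N 1 (moser N j) ≤ (exp 1 + 51) * exp 1 := by
  have he := exp_pos 1
  rcases Nat.eq_zero_or_pos j with rfl | hj
  · rw [Jfun_one_eq_one_of_eqOn_zero (by omega) fun s hs => moser_zero_apply hN hs.1]
    nlinarith [add_one_le_exp (1 : ℝ)]
  · rw [Jfun_one_moser_eq_add hN hj]
    have hr := moserRatio_le hj
    nlinarith [integral_inner_le hN hj, integral_outer_le hN hj]

theorem le_liminf_Jfun_one_moser {N : ℕ} (hN : 2 ≤ N) :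
    exp 1 + 1 ≤ liminf (fun j => Jfun N 1 (moser N j)) atTop := by
  have hlower : Tendsto (fun j : ℕ => moserRatio j + 1 - 2 / j) atTop (𝓝 (exp 1 + 1)) := by
    simpa using (tendsto_moserRatio.add_const 1).sub (tendsto_const_div_atTop_nhds_zero_nat 2)
  rw [← hlower.liminf_eq]
  exact liminf_le_liminf
    ((eventually_ge_atTop 1).mono fun j hj => moserRatio_add_one_sub_le_Jfun hN hj)
    hlower.isBoundedUnder_ge (isCoboundedUnder_ge_of_le atTop (Jfun_one_moser_le hN))

/-- along the infinitesimal Moser sequence, the critical functional `J_1`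
satisfies `liminf J_1(w_j) ≥ e + 1 > 1 = J_1(0)` while `sup_j J_1(w_j) < ∞`; in particular
`J_1` fails to be continuous along the (weakly null) infinitesimal Moser sequence. -/
theorem Jfun_one_moser_noncompact (N : ℕ) (hN : 2 ≤ N) :
    Real.exp 1 + 1 ≤ Filter.liminf (fun j : ℕ => Jfun N 1 (moser N j)) Filter.atTop ∧
    (∃ C : ℝ, ∀ j : ℕ, Jfun N 1 (moser N j) ≤ C) ∧
    Jfun N 1 (fun _ => 0) = 1 ∧
    (1 : ℝ) < Real.exp 1 + 1 ∧
    ¬ Filter.Tendsto (fun j : ℕ => Jfun N 1 (moser N j)) Filter.atTop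
        (nhds (Jfun N 1 (fun _ => 0))) := by
  have hzero : Jfun N 1 (fun _ => 0) = 1 := Jfun_one_eq_one_of_eqOn_zero (by omega) fun _ _ => rfl
  have hliminf := le_liminf_Jfun_one_moser hN
  have hgap : (1 : ℝ) < exp 1 + 1 := by linarith [exp_pos 1]
  refine ⟨hliminf, ⟨_, Jfun_one_moser_le hN⟩, hzero, hgap, fun hlim => ?_⟩
  rw [hlim.liminf_eq, hzero] at hliminf
  linarith
end

section
/- Let N ≥ 2 be an integer and γ < 1. Then along the infinitesimal Moser sequence w_j one has J_γ(w_j) = ∫₀¹ exp( ( log(e/s) + γ·log log(e/s) ) · w_j(s)^N / s^{N−1} ) ds → 1 = J_γ(0) as j → ∞. -/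
/-!
For `s ≤ 1 / j` the exponent of the integrand is `g(s) · j s` and for `s > 1 / j` it is
`g(s) / (j s) ^ (N - 1)`, where `g(s) = log (e/s) + γ log log (e/s)`. With `x = log (e j)` and
`L = x + max γ 0 · log x`, the integrand is at most `exp (L j s + 2)` on `(0, 1/j]` and at most
`exp (L (3 - j s) / 2) + exp (L / 2)` beyond, so the part of the integral over `(0, x² / j]` is
`O(e^L / (L j)) + O(x² e^{L/2} / j) = O(x ^ (max γ 0 - 1)) + o(1)`, which vanishes because
`γ < 1`. On `[x² / j, 1]` the exponent is at most `(1 + |γ|) / x` in absolute value, so the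
integrand is uniformly close to `1` there.
-/

open MeasureTheory Real Set Filter

open scoped Topology

namespace MoserSequence

theorem log_exp_one_div {s : ℝ} (hs : 0 < s) : log (exp 1 / s) = 1 - log s := by
  rw [log_div (exp_ne_zero 1) hs.ne', log_exp]

theorem one_le_log_exp_one_div {s : ℝ} (hs : 0 < s) (hs1 : s ≤ 1) : 1 ≤ log (exp 1 / s) := by
  rw [log_exp_one_div hs]
  linarith [log_nonpos hs.le hs1]

theorem add_mul_log_le_add_max_mul_log {γ x : ℝ} (hx : 1 ≤ x) :
    x + γ * log x ≤ x + max γ 0 * log x := by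
  gcongr
  · exact log_nonneg hx
  · exact le_max_left _ _

theorem abs_add_mul_log_le {γ x : ℝ} (hx : 1 ≤ x) : |x + γ * log x| ≤ (1 + |γ|) * x := by
  have h0 := log_nonneg hx
  calc |x + γ * log x| ≤ |x| + |γ| * |log x| := by rw [← abs_mul]; exact abs_add_le _ _
    _ ≤ (1 + |γ|) * x := by
      rw [abs_of_nonneg (by linarith), abs_of_nonneg h0]
      nlinarith [log_le_self (zero_le_one.trans hx), abs_nonneg γ]

theorem add_mul_log_mono {c x y : ℝ} (hc : 0 ≤ c) (hx : 0 < x) (hxy : x ≤ y) :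
    x + c * log x ≤ y + c * log y := by
  gcongr

/-- `t log (1/t) ≤ 1` combined with `log (x - log t) ≤ log x - log t`. -/
theorem add_mul_log_sub_log_mul_le {c x t : ℝ} (hc0 : 0 ≤ c) (hc1 : c ≤ 1) (hx : 1 ≤ x)
    (ht : 0 < t) (ht1 : t ≤ 1) :
    ((x - log t) + c * log (x - log t)) * t ≤ (x + c * log x) * t + 2 := by
  have hlt : log t ≤ 0 := log_nonpos ht.le ht1
  have hx0 : 0 < x := zero_lt_one.trans_le hx
  have hlog : log (x - log t) ≤ log x - log t := by
    have h := log_le_sub_one_of_pos (div_pos (by linarith) hx0 : 0 < (x - log t) / x)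
    rw [log_div (by linarith) hx0.ne'] at h
    have : (x - log t) / x - 1 ≤ -log t := by
      rw [div_sub_one hx0.ne', div_le_iff₀ hx0]; nlinarith
    linarith
  have htlog : -(t * log t) ≤ 1 := by
    have h := log_le_sub_one_of_pos (inv_pos.2 ht)
    rw [log_inv] at h
    have := mul_le_mul_of_nonneg_left h ht.le
    rw [mul_sub, mul_inv_cancel₀ ht.ne'] at this
    linarith
  nlinarith [mul_le_mul_of_nonneg_left hlog hc0]

theorem exp_div_le_add {L t : ℝ} (hL : 0 ≤ L) (ht : 1 ≤ t) :
    exp (L / t) ≤ exp (L * (3 - t) / 2) + exp (L / 2) := by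
  have ht0 : 0 < t := zero_lt_one.trans_le ht
  rcases le_total t 2 with h2 | h2
  · have : L / t ≤ L * (3 - t) / 2 := by
      rw [div_le_iff₀ ht0]
      nlinarith [mul_nonneg hL (mul_nonneg (sub_nonneg.2 ht) (sub_nonneg.2 h2))]
    linarith [exp_le_exp.2 this, exp_pos (L / 2)]
  · have : L / t ≤ L / 2 := div_le_div_of_nonneg_left hL two_pos h2
    linarith [exp_le_exp.2 this, exp_pos (L * (3 - t) / 2)]

theorem moser_pow_div_of_le {N j : ℕ} (hN : 1 ≤ N) {s : ℝ} (hs : s ≤ 1 / j) :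
    moser N j s ^ N / s ^ (N - 1) = j * s := by
  have hNr : (N : ℝ) ≠ 0 := by positivity
  rw [moser, if_pos hs, mul_pow, ← rpow_natCast ((j : ℝ) ^ _), ← rpow_mul (Nat.cast_nonneg j),
    one_div_mul_cancel hNr, rpow_one]
  rcases eq_or_ne s 0 with rfl | hs0
  · simp [zero_pow (by omega : N ≠ 0)]
  · rw [← pow_sub_mul_pow s hN, pow_one]
    field_simp

theorem moser_pow_div_of_lt {N j : ℕ} (hN : 1 ≤ N) {s : ℝ} (hs : 1 / j < s) :
    moser N j s ^ N / s ^ (N - 1) = ((j * s) ^ (N - 1))⁻¹ := by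
  have hNr : (N : ℝ) ≠ 0 := by positivity
  have hexp : -(((N : ℝ) - 1) / N) * N = -((N - 1 : ℕ) : ℝ) := by
    rw [Nat.cast_sub hN]; field_simp; ring
  rw [moser, if_neg (not_le.2 hs), ← rpow_natCast ((j : ℝ) ^ _),
    ← rpow_mul (Nat.cast_nonneg j), hexp, rpow_neg (Nat.cast_nonneg j), rpow_natCast, mul_pow,
    mul_inv, div_eq_mul_inv]

noncomputable def logWeight (γ s : ℝ) : ℝ := log (exp 1 / s) + γ * log (log (exp 1 / s))

noncomputable def moserIntegrand (N : ℕ) (γ : ℝ) (j : ℕ) (s : ℝ) : ℝ :=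
  exp (logWeight γ s * (moser N j s ^ N / s ^ (N - 1)))

/-- `log (e j)`, the value of `log (e / s)` at the corner `s = 1 / j` of `moser N j`. -/
noncomputable def moserLog (j : ℕ) : ℝ := 1 + log j

/-- The logarithm of the peak height `e j (log (e j)) ^ max γ 0` of the integrand. -/
noncomputable def moserPeak (γ : ℝ) (j : ℕ) : ℝ := moserLog j + max γ 0 * log (moserLog j)

theorem Jfun_moser (N : ℕ) (γ : ℝ) (j : ℕ) :
    Jfun N γ (moser N j) = ∫ s in (0 : ℝ)..1, moserIntegrand N γ j s := by
  rw [intervalIntegral.integral_of_le zero_le_one]; rfl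

section Pointwise

variable {N j : ℕ} {γ s : ℝ}

theorem moserIntegrand_pos : 0 < moserIntegrand N γ j s := exp_pos _

theorem one_le_moserLog (hj : 1 ≤ j) : 1 ≤ moserLog j := by
  have : 0 ≤ log j := log_nonneg (by exact_mod_cast hj)
  rw [moserLog]; linarith

theorem moserLog_le_moserPeak (hj : 1 ≤ j) : moserLog j ≤ moserPeak γ j := by
  have := log_nonneg (one_le_moserLog hj)
  rw [moserPeak]; nlinarith [le_max_right γ 0]

theorem one_le_moserPeak (hj : 1 ≤ j) : 1 ≤ moserPeak γ j :=
  (one_le_moserLog hj).trans (moserLog_le_moserPeak hj)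

theorem log_exp_one_div_eq_moserLog_sub (hj : 1 ≤ j) (hs : 0 < s) :
    log (exp 1 / s) = moserLog j - log (j * s) := by
  rw [log_exp_one_div hs, moserLog, log_mul (by positivity) hs.ne']; ring

theorem logWeight_le (hs : 0 < s) (hs1 : s ≤ 1) :
    logWeight γ s ≤ log (exp 1 / s) + max γ 0 * log (log (exp 1 / s)) :=
  add_mul_log_le_add_max_mul_log (one_le_log_exp_one_div hs hs1)

theorem logWeight_le_moserPeak (hj : 1 ≤ j) (hs : 1 / j < s) (hs1 : s ≤ 1) :
    logWeight γ s ≤ moserPeak γ j := by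
  have hs0 : 0 < s := lt_of_le_of_lt (by positivity) hs
  have hjs : 0 ≤ log (j * s) := by
    rw [div_lt_iff₀' (by positivity)] at hs; exact log_nonneg hs.le
  refine (logWeight_le hs0 hs1).trans (add_mul_log_mono (le_max_right γ 0) ?_ ?_)
  · linarith [one_le_log_exp_one_div hs0 hs1]
  · rw [log_exp_one_div_eq_moserLog_sub hj hs0]; linarith

theorem moserIntegrand_le_of_le (hγ : γ ≤ 1) (hN : 1 ≤ N) (hj : 1 ≤ j) (hs0 : 0 < s)
    (hs : s ≤ 1 / j) : moserIntegrand N γ j s ≤ exp (moserPeak γ j * j * s + 2) := by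
  have hjs : j * s ≤ 1 := by rwa [le_div_iff₀' (by positivity)] at hs
  have hs1 : s ≤ 1 := hs.trans (div_le_one_of_le₀ (by exact_mod_cast hj) (by positivity))
  rw [moserIntegrand, moser_pow_div_of_le hN hs, exp_le_exp, mul_assoc]
  calc logWeight γ s * (j * s)
      ≤ (log (exp 1 / s) + max γ 0 * log (log (exp 1 / s))) * (j * s) := by
        gcongr; exact logWeight_le hs0 hs1
    _ ≤ moserPeak γ j * (j * s) + 2 := by
        rw [log_exp_one_div_eq_moserLog_sub hj hs0]
        exact add_mul_log_sub_log_mul_le (le_max_right γ 0) (max_le hγ zero_le_one)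
          (one_le_moserLog hj) (by positivity) hjs

theorem moserIntegrand_le_of_lt (hN : 2 ≤ N) (hj : 1 ≤ j) (hs : 1 / j < s) (hs1 : s ≤ 1) :
    moserIntegrand N γ j s ≤
      exp (moserPeak γ j * (3 - j * s) / 2) + exp (moserPeak γ j / 2) := by
  have hjs : 1 ≤ j * s := by rw [div_lt_iff₀' (by positivity)] at hs; exact hs.le
  have hpeak : 0 ≤ moserPeak γ j := zero_le_one.trans (one_le_moserPeak hj)
  refine le_trans ?_ (exp_div_le_add hpeak hjs)
  rw [moserIntegrand, moser_pow_div_of_lt (by omega) hs, exp_le_exp]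
  calc logWeight γ s * ((j * s) ^ (N - 1))⁻¹ ≤ moserPeak γ j * ((j * s) ^ (N - 1))⁻¹ := by
        gcongr; exact logWeight_le_moserPeak hj hs hs1
    _ ≤ moserPeak γ j / (j * s) := by
        rw [← div_eq_mul_inv]
        gcongr
        exact le_self_pow₀ hjs (by omega)

theorem abs_logWeight_mul_moser_le (hN : 2 ≤ N) (hj : 1 ≤ j) (hs : moserLog j ^ 2 / j < s)
    (hs1 : s ≤ 1) :
    |logWeight γ s * (moser N j s ^ N / s ^ (N - 1))| ≤ (1 + |γ|) / moserLog j := by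
  have hx := one_le_moserLog hj
  have hjs : moserLog j ^ 2 ≤ j * s := by rw [div_lt_iff₀' (by positivity)] at hs; exact hs.le
  have hjs1 : 1 ≤ j * s := le_trans (by nlinarith) hjs
  have h1j : 1 / (j : ℝ) < s := lt_of_le_of_lt (by gcongr; nlinarith) hs
  have hs0 : 0 < s := lt_of_le_of_lt (by positivity) hs
  have hlog : log (exp 1 / s) ≤ moserLog j := by
    rw [log_exp_one_div_eq_moserLog_sub hj hs0]; linarith [log_nonneg hjs1]
  rw [moser_pow_div_of_lt (by omega) h1j, abs_mul, abs_inv,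
    abs_of_pos (pow_pos (by linarith) _ : (0 : ℝ) < (j * s) ^ (N - 1)),
    ← div_eq_mul_inv]
  calc |logWeight γ s| / (j * s) ^ (N - 1) ≤ (1 + |γ|) * moserLog j / moserLog j ^ 2 := by
        gcongr
        · exact (abs_add_mul_log_le (one_le_log_exp_one_div hs0 hs1)).trans (by gcongr)
        · exact hjs.trans (le_self_pow₀ hjs1 (by omega))
    _ = (1 + |γ|) / moserLog j := by field_simp

end Pointwise

theorem integral_exp_mul_add {b : ℝ} (hb : b ≠ 0) (d u v : ℝ) :
    ∫ s in u..v, exp (b * s + d) = (exp (b * v + d) - exp (b * u + d)) / b := by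
  rw [intervalIntegral.integral_comp_mul_add (fun x => exp x) hb d, integral_exp, smul_eq_mul,
    inv_mul_eq_div]

section Integrals

variable {N j : ℕ} {γ : ℝ}

theorem measurable_moserIntegrand : Measurable (moserIntegrand N γ j) := by
  have : Measurable (moser N j) :=
    Measurable.ite measurableSet_Iic (measurable_const_mul _) measurable_const
  unfold moserIntegrand logWeight
  fun_prop

theorem intervalIntegrable_moserIntegrand (hγ : γ ≤ 1) (hN : 2 ≤ N) (hj : 1 ≤ j) {u v : ℝ}
    (hu : u ∈ Icc (0 : ℝ) 1) (hv : v ∈ Icc (0 : ℝ) 1) :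
    IntervalIntegrable (moserIntegrand N γ j) volume u v := by
  have hL : 0 ≤ moserPeak γ j := zero_le_one.trans (one_le_moserPeak hj)
  have hbound : ∀ s ∈ Ioc (0 : ℝ) 1, ‖moserIntegrand N γ j s‖ ≤
      exp (moserPeak γ j + 2) + exp (moserPeak γ j / 2) := by
    intro s ⟨hs0, hs1⟩
    rw [norm_of_nonneg moserIntegrand_pos.le]
    rcases le_or_gt s (1 / j) with hs | hs
    · have hjs : j * s ≤ 1 := by rwa [le_div_iff₀' (by positivity)] at hs
      have : moserPeak γ j * j * s ≤ moserPeak γ j := by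
        rw [mul_assoc]; exact mul_le_of_le_one_right hL hjs
      calc moserIntegrand N γ j s ≤ exp (moserPeak γ j * j * s + 2) :=
            moserIntegrand_le_of_le hγ (by omega) hj hs0 hs
        _ ≤ exp (moserPeak γ j + 2) + exp (moserPeak γ j / 2) := by
            have := exp_le_exp.2 (add_le_add_left this 2)
            linarith [exp_pos (moserPeak γ j / 2)]
    · have hjs : 1 < j * s := by rwa [div_lt_iff₀' (by positivity)] at hs
      refine (moserIntegrand_le_of_lt hN hj hs hs1).trans ?_
      gcongr ?_ + _
      exact exp_le_exp.2 (by nlinarith)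
  have h01 : IntervalIntegrable (moserIntegrand N γ j) volume 0 1 :=
    (intervalIntegrable_iff_integrableOn_Ioc_of_le zero_le_one).2 <|
      Measure.integrableOn_of_bounded measure_Ioc_lt_top.ne
        measurable_moserIntegrand.aestronglyMeasurable
        ((ae_restrict_iff' measurableSet_Ioc).2 (ae_of_all _ hbound))
  rw [← uIcc_of_le zero_le_one] at hu hv
  exact h01.mono_set (uIcc_subset_uIcc hu hv)

theorem integral_moserIntegrand_head_le (hγ : γ ≤ 1) (hN : 2 ≤ N) (hj : 1 ≤ j) :
    ∫ s in (0 : ℝ)..1 / j, moserIntegrand N γ j s ≤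
      exp 2 * (exp (moserPeak γ j) / (moserPeak γ j * j)) := by
  have hj0 : (0 : ℝ) < j := by exact_mod_cast hj
  have hL : 0 < moserPeak γ j := zero_lt_one.trans_le (one_le_moserPeak hj)
  have h1j : (1 : ℝ) / j ∈ Icc (0 : ℝ) 1 :=
    ⟨by positivity, div_le_one_of_le₀ (by exact_mod_cast hj) hj0.le⟩
  calc ∫ s in (0 : ℝ)..1 / j, moserIntegrand N γ j s
      ≤ ∫ s in (0 : ℝ)..1 / j, exp (moserPeak γ j * j * s + 2) :=
        intervalIntegral.integral_mono_on_of_le_Ioo h1j.1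
          (intervalIntegrable_moserIntegrand hγ hN hj ⟨le_rfl, zero_le_one⟩ h1j)
          (Continuous.intervalIntegrable (by fun_prop) _ _)
          fun s hs => moserIntegrand_le_of_le hγ (by omega) hj hs.1 hs.2.le
    _ = (exp (moserPeak γ j + 2) - exp 2) / (moserPeak γ j * j) := by
        have : moserPeak γ j * j * (1 / j) = moserPeak γ j := by field_simp
        rw [integral_exp_mul_add (by positivity), this, mul_zero, zero_add]
    _ ≤ exp 2 * (exp (moserPeak γ j) / (moserPeak γ j * j)) := by
        rw [exp_add, ← mul_div_assoc, mul_comm (exp 2)]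
        gcongr
        linarith [exp_pos 2]

theorem integral_moserIntegrand_middle_le (hγ : γ ≤ 1) (hN : 2 ≤ N) (hj : 1 ≤ j) {r : ℝ}
    (hr : 1 / j ≤ r) (hr1 : r ≤ 1) :
    ∫ s in 1 / j..r, moserIntegrand N γ j s ≤
      2 * (exp (moserPeak γ j) / (moserPeak γ j * j)) + r * exp (moserPeak γ j / 2) := by
  have hj0 : (0 : ℝ) < j := by exact_mod_cast hj
  have hL : 0 < moserPeak γ j := zero_lt_one.trans_le (one_le_moserPeak hj)
  have h1j : (0 : ℝ) ≤ 1 / j := by positivity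
  set b := -(moserPeak γ j * j / 2)
  have hb : b ≠ 0 := neg_ne_zero.2 (by positivity)
  calc ∫ s in 1 / j..r, moserIntegrand N γ j s
      ≤ ∫ s in 1 / j..r, (exp (b * s + 3 * moserPeak γ j / 2) + exp (moserPeak γ j / 2)) := by
        refine intervalIntegral.integral_mono_on_of_le_Ioo hr
          (intervalIntegrable_moserIntegrand hγ hN hj ⟨h1j, hr.trans hr1⟩
            ⟨h1j.trans hr, hr1⟩)
          (Continuous.intervalIntegrable (by fun_prop) _ _) fun s hs => ?_
        convert moserIntegrand_le_of_lt hN hj hs.1 (hs.2.le.trans hr1) using 3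
        ring
    _ = (exp (moserPeak γ j) - exp (b * r + 3 * moserPeak γ j / 2)) / (moserPeak γ j * j / 2)
          + (r - 1 / j) * exp (moserPeak γ j / 2) := by
        rw [intervalIntegral.integral_add (Continuous.intervalIntegrable (by fun_prop) _ _)
          intervalIntegrable_const, integral_exp_mul_add hb, intervalIntegral.integral_const,
          smul_eq_mul]
        have : b * (1 / j) + 3 * moserPeak γ j / 2 = moserPeak γ j := by field_simp; ring
        rw [this, ← neg_div_neg_eq, neg_sub, neg_neg]
    _ ≤ exp (moserPeak γ j) / (moserPeak γ j * j / 2) + r * exp (moserPeak γ j / 2) := by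
        gcongr
        · linarith [exp_pos (b * r + 3 * moserPeak γ j / 2)]
        · linarith
    _ = 2 * (exp (moserPeak γ j) / (moserPeak γ j * j)) + r * exp (moserPeak γ j / 2) := by
        ring

theorem le_integral_moserIntegrand_tail (hγ : γ ≤ 1) (hN : 2 ≤ N) (hj : 1 ≤ j)
    (hr : moserLog j ^ 2 ≤ j) :
    (1 - moserLog j ^ 2 / j) * exp (-((1 + |γ|) / moserLog j)) ≤
      ∫ s in moserLog j ^ 2 / j..1, moserIntegrand N γ j s := by
  have hr1 : moserLog j ^ 2 / j ≤ 1 := div_le_one_of_le₀ hr (by positivity)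
  calc (1 - moserLog j ^ 2 / j) * exp (-((1 + |γ|) / moserLog j))
      = ∫ s in moserLog j ^ 2 / j..1, exp (-((1 + |γ|) / moserLog j)) := by
        rw [intervalIntegral.integral_const, smul_eq_mul]
    _ ≤ ∫ s in moserLog j ^ 2 / j..1, moserIntegrand N γ j s :=
        intervalIntegral.integral_mono_on_of_le_Ioo hr1 intervalIntegrable_const
          (intervalIntegrable_moserIntegrand hγ hN hj ⟨by positivity, hr1⟩
            ⟨zero_le_one, le_rfl⟩)
          fun s hs => exp_le_exp.2 (abs_le.1 (abs_logWeight_mul_moser_le hN hj hs.1 hs.2.le)).1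

theorem integral_moserIntegrand_tail_le (hγ : γ ≤ 1) (hN : 2 ≤ N) (hj : 1 ≤ j)
    (hr : moserLog j ^ 2 ≤ j) :
    ∫ s in moserLog j ^ 2 / j..1, moserIntegrand N γ j s ≤ exp ((1 + |γ|) / moserLog j) := by
  have hr1 : moserLog j ^ 2 / j ≤ 1 := div_le_one_of_le₀ hr (by positivity)
  calc ∫ s in moserLog j ^ 2 / j..1, moserIntegrand N γ j s
      ≤ ∫ s in moserLog j ^ 2 / j..1, exp ((1 + |γ|) / moserLog j) :=
        intervalIntegral.integral_mono_on_of_le_Ioo hr1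
          (intervalIntegrable_moserIntegrand hγ hN hj ⟨by positivity, hr1⟩
            ⟨zero_le_one, le_rfl⟩)
          intervalIntegrable_const
          fun s hs => exp_le_exp.2 (abs_le.1 (abs_logWeight_mul_moser_le hN hj hs.1 hs.2.le)).2
    _ = (1 - moserLog j ^ 2 / j) * exp ((1 + |γ|) / moserLog j) := by
        rw [intervalIntegral.integral_const, smul_eq_mul]
    _ ≤ exp ((1 + |γ|) / moserLog j) :=
        mul_le_of_le_one_left (exp_pos _).le
          (by linarith [show 0 ≤ moserLog j ^ 2 / j by positivity])

theorem le_Jfun_moser (hγ : γ ≤ 1) (hN : 2 ≤ N) (hj : 1 ≤ j) (hr : moserLog j ^ 2 ≤ j) :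
    (1 - moserLog j ^ 2 / j) * exp (-((1 + |γ|) / moserLog j)) ≤ Jfun N γ (moser N j) := by
  have hr0 : 0 ≤ moserLog j ^ 2 / j := by positivity
  have hr1 : moserLog j ^ 2 / j ≤ 1 := div_le_one_of_le₀ hr (by positivity)
  rw [Jfun_moser, ← intervalIntegral.integral_add_adjacent_intervals
    (intervalIntegrable_moserIntegrand hγ hN hj ⟨le_rfl, zero_le_one⟩ ⟨hr0, hr1⟩)
    (intervalIntegrable_moserIntegrand hγ hN hj ⟨hr0, hr1⟩ ⟨zero_le_one, le_rfl⟩)]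
  have : 0 ≤ ∫ s in (0 : ℝ)..moserLog j ^ 2 / j, moserIntegrand N γ j s :=
    intervalIntegral.integral_nonneg hr0 fun _ _ => moserIntegrand_pos.le
  linarith [le_integral_moserIntegrand_tail hγ hN hj hr]

theorem Jfun_moser_le (hγ : γ ≤ 1) (hN : 2 ≤ N) (hj : 1 ≤ j) (hr : moserLog j ^ 2 ≤ j) :
    Jfun N γ (moser N j) ≤
      (exp 2 + 2) * (exp (moserPeak γ j) / (moserPeak γ j * j))
        + moserLog j ^ 2 / j * exp (moserPeak γ j / 2) + exp ((1 + |γ|) / moserLog j) := by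
  have h1j : (1 : ℝ) / j ∈ Icc (0 : ℝ) 1 :=
    ⟨by positivity, div_le_one_of_le₀ (by exact_mod_cast hj) (by positivity)⟩
  have hr1j : 1 / (j : ℝ) ≤ moserLog j ^ 2 / j := by
    gcongr; nlinarith [one_le_moserLog hj]
  have hrI : moserLog j ^ 2 / j ∈ Icc (0 : ℝ) 1 :=
    ⟨h1j.1.trans hr1j, div_le_one_of_le₀ hr (by positivity)⟩
  have hint {u v : ℝ} (hu : u ∈ Icc (0 : ℝ) 1) (hv : v ∈ Icc (0 : ℝ) 1) :=
    intervalIntegrable_moserIntegrand (N := N) (j := j) hγ hN hj hu hv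
  rw [Jfun_moser, ← intervalIntegral.integral_add_adjacent_intervals
      (hint ⟨le_rfl, zero_le_one⟩ hrI) (hint hrI ⟨zero_le_one, le_rfl⟩),
    ← intervalIntegral.integral_add_adjacent_intervals
      (hint ⟨le_rfl, zero_le_one⟩ h1j) (hint h1j hrI)]
  have := integral_moserIntegrand_head_le hγ hN hj
  have := integral_moserIntegrand_middle_le hγ hN hj hr1j hrI.2
  have := integral_moserIntegrand_tail_le hγ hN hj hr
  linarith

end Integrals

theorem tendsto_moserLog : Tendsto moserLog atTop atTop :=
  tendsto_atTop_add_const_left _ 1 (tendsto_log_atTop.comp tendsto_natCast_atTop_atTop)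

theorem natCast_eq_exp_moserLog {j : ℕ} (hj : 1 ≤ j) : (j : ℝ) = exp (moserLog j - 1) := by
  rw [moserLog, add_sub_cancel_left, exp_log (by exact_mod_cast hj)]

theorem exp_moserPeak_div_le {γ : ℝ} {j : ℕ} (hj : 1 ≤ j) :
    exp (moserPeak γ j) / (moserPeak γ j * j) ≤
      exp (1 + (max γ 0 - 1) * log (moserLog j)) := by
  have hx := one_le_moserLog hj
  calc exp (moserPeak γ j) / (moserPeak γ j * j)
      ≤ exp (moserPeak γ j) / (moserLog j * j) := by
        gcongr
        exact moserLog_le_moserPeak hj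
    _ = exp (moserPeak γ j) / (exp (log (moserLog j)) * exp (moserLog j - 1)) := by
        rw [natCast_eq_exp_moserLog hj, exp_log (zero_lt_one.trans_le hx)]
    _ = exp (1 + (max γ 0 - 1) * log (moserLog j)) := by
        rw [← exp_add, ← exp_sub, moserPeak]
        ring_nf

theorem tendsto_exp_moserPeak_div {γ : ℝ} (hγ : γ < 1) :
    Tendsto (fun j => exp (moserPeak γ j) / (moserPeak γ j * j)) atTop (𝓝 0) := by
  have hlog : Tendsto (fun j => 1 + (max γ 0 - 1) * log (moserLog j)) atTop atBot :=
    tendsto_atBot_add_const_left _ 1 <|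
      (tendsto_log_atTop.comp tendsto_moserLog).const_mul_atTop_of_neg (by simp [hγ])
  refine squeeze_zero' ?_ ?_ (tendsto_exp_atBot.comp hlog)
  · filter_upwards [eventually_ge_atTop 1] with j hj
    have := one_le_moserPeak (γ := γ) hj
    positivity
  · filter_upwards [eventually_ge_atTop 1] with j hj
    exact exp_moserPeak_div_le hj

theorem moserLog_sq_div_mul_exp_le {γ : ℝ} (hγ : γ ≤ 1) {j : ℕ} (hj : 1 ≤ j) :
    moserLog j ^ 2 / j * exp (moserPeak γ j / 2) ≤
      8 * exp 1 * ((moserLog j / 2) ^ 3 * exp (-(moserLog j / 2))) := by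
  have hx := one_le_moserLog hj
  have hx0 : 0 < moserLog j := zero_lt_one.trans_le hx
  have hpeak : moserPeak γ j / 2 ≤ moserLog j / 2 + log (moserLog j) := by
    have := log_nonneg hx
    rw [moserPeak]; nlinarith [max_le hγ zero_le_one, le_max_right γ 0]
  calc moserLog j ^ 2 / j * exp (moserPeak γ j / 2)
      ≤ moserLog j ^ 2 / j * exp (moserLog j / 2 + log (moserLog j)) := by gcongr
    _ = 8 * exp 1 * ((moserLog j / 2) ^ 3 * exp (-(moserLog j / 2))) := by
        have hsplit :
            exp (moserLog j - 1) = exp (moserLog j / 2) * exp (moserLog j / 2) / exp 1 := by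
          rw [← exp_add, ← exp_sub]; ring_nf
        rw [natCast_eq_exp_moserLog hj, hsplit, exp_add, exp_log hx0, exp_neg]
        field_simp
        ring

theorem tendsto_moserLog_sq_div_mul_exp {γ : ℝ} (hγ : γ ≤ 1) :
    Tendsto (fun j => moserLog j ^ 2 / j * exp (moserPeak γ j / 2)) atTop (𝓝 0) := by
  have h := ((tendsto_pow_mul_exp_neg_atTop_nhds_zero 3).comp
    (tendsto_moserLog.atTop_div_const two_pos)).const_mul (8 * exp 1)
  rw [mul_zero] at h
  refine squeeze_zero' ?_ ?_ h
  · exact Eventually.of_forall fun j => by positivity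
  · filter_upwards [eventually_ge_atTop 1] with j hj
    exact moserLog_sq_div_mul_exp_le hγ hj

theorem tendsto_moserLog_sq_div : Tendsto (fun j => moserLog j ^ 2 / j) atTop (𝓝 0) := by
  refine squeeze_zero' (Eventually.of_forall fun j => by positivity) ?_
    (tendsto_moserLog_sq_div_mul_exp (γ := 0) zero_le_one)
  filter_upwards [eventually_ge_atTop 1] with j hj
  refine le_mul_of_one_le_right (by positivity) (one_le_exp ?_)
  linarith [one_le_moserPeak (γ := 0) hj]

theorem eventually_moserLog_sq_le : ∀ᶠ j in atTop, moserLog j ^ 2 ≤ j := by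
  filter_upwards [tendsto_moserLog_sq_div.eventually (gt_mem_nhds one_pos),
    eventually_ge_atTop 1] with j hlt hj
  rw [div_lt_one (by exact_mod_cast hj)] at hlt
  exact hlt.le

theorem Jfun_zero {N : ℕ} (hN : 1 ≤ N) (γ : ℝ) : Jfun N γ (fun _ => 0) = 1 := by
  simp [Jfun, zero_pow (by omega : N ≠ 0)]

end MoserSequence

open MoserSequence

/-- for `γ < 1`, `J_γ (w_j) → 1 = J_γ(0)` along the infinitesimal
Moser sequence. -/
theorem Jfun_moser_tendsto_one (N : ℕ) (hN : 2 ≤ N) (γ : ℝ) (hγ : γ < 1) :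
    Filter.Tendsto (fun j : ℕ => Jfun N γ (moser N j)) Filter.atTop (nhds 1) ∧
    Jfun N γ (fun _ => 0) = 1 := by
  have hsmall : Tendsto (fun j => (1 + |γ|) / moserLog j) atTop (𝓝 0) :=
    tendsto_const_nhds.div_atTop tendsto_moserLog
  have lower : Tendsto (fun j => (1 - moserLog j ^ 2 / j) * exp (-((1 + |γ|) / moserLog j)))
      atTop (𝓝 1) := by
    simpa using (tendsto_const_nhds.sub tendsto_moserLog_sq_div).mul
      ((continuous_exp.tendsto _).comp hsmall.neg)
  have upper : Tendsto (fun j => (exp 2 + 2) * (exp (moserPeak γ j) / (moserPeak γ j * j))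
      + moserLog j ^ 2 / j * exp (moserPeak γ j / 2) + exp ((1 + |γ|) / moserLog j))
      atTop (𝓝 1) := by
    simpa using (((tendsto_exp_moserPeak_div hγ).const_mul (exp 2 + 2)).add
      (tendsto_moserLog_sq_div_mul_exp hγ.le)).add ((continuous_exp.tendsto _).comp hsmall)
  refine ⟨tendsto_of_tendsto_of_tendsto_of_le_of_le' lower upper ?_ ?_, Jfun_zero (by omega) γ⟩
  · filter_upwards [eventually_ge_atTop 1, eventually_moserLog_sq_le] with j hj hr
    exact le_Jfun_moser hγ.le hN hj hr
  · filter_upwards [eventually_ge_atTop 1, eventually_moserLog_sq_le] with j hj hr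
    exact Jfun_moser_le hγ.le hN hj hr
end

section
/- Fix a real number N > 1 and for k > 1 let C_{N,k} = (1/((N−1)k)) · [ (k−1)·Γ(Nk/(k−1)) / ( Γ(1/(k−1))·Γ((Nk−1)/(k−1)) ) ]^{k−1} denote the sharp constant in the Bliss inequality. Then k·C_{N,k} → (1/(N−1))·e^{1 + 1/2 + ⋯ + 1/(N−1)} as k → ∞ (for integer N ≥ 2, the exponent being the harmonic number H_{N−1}). -/
open Real Filter

/-- The sharp constant `C_{N,k}` in the Bliss inequality. -/
noncomputable def CBliss (N k : ℝ) : ℝ :=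
  (1 / ((N - 1) * k)) *
    ((k - 1) * Real.Gamma (N * k / (k - 1)) /
      (Real.Gamma (1 / (k - 1)) * Real.Gamma ((N * k - 1) / (k - 1)))) ^ (k - 1)

/-!
Put `ε = 1/(k-1)`. Since `Γ(1/(k-1)) = (k-1) Γ(1+ε)`, the bracket in `C_{N,k}` is
`A(ε) = Γ(N + Nε) / (Γ(1+ε) Γ(N + (N-1)ε))`, so `k C_{N,k} = (N-1)⁻¹ A(ε)^{1/ε}`. As `A(0) = 1`,
`A(ε)^{1/ε} → exp((log A)'(0)) = exp(N ψ(N) - ψ(1) - (N-1) ψ(N)) = exp(ψ(N) - ψ(1))`, where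
`ψ = Γ'/Γ`, and the recurrence `ψ(x+1) = ψ(x) + 1/x` gives `ψ(N) - ψ(1) = 1 + 1/2 + ⋯ + 1/(N-1)`.
-/

open Topology Finset

namespace Real

theorem logDeriv_Gamma_add_one {x : ℝ} (hx : ∀ m : ℕ, x ≠ -m) :
    logDeriv Gamma (x + 1) = logDeriv Gamma x + x⁻¹ := by
  have hx0 : x ≠ 0 := by simpa using hx 0
  have hx1 : ∀ m : ℕ, x + 1 ≠ -m := fun m h => hx (m + 1) (by push_cast; linarith)
  have hshift : logDeriv (fun y => Gamma (y + 1)) x = logDeriv Gamma (x + 1) := by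
    simpa [Function.comp_def] using logDeriv_comp (g := fun y : ℝ => y + 1)
      (differentiableAt_Gamma hx1) (differentiableAt_id.add_const 1)
  have hrec : (fun y => Gamma (y + 1)) =ᶠ[𝓝 x] fun y => y * Gamma y :=
    (eventually_ne_nhds hx0).mono fun y hy => Gamma_add_one hy
  rw [← hshift, (logDeriv_congr_nhds hrec).eq_of_nhds, logDeriv_mul (f := fun y => y) x hx0
    (Gamma_ne_zero hx) differentiableAt_fun_id (differentiableAt_Gamma hx), logDeriv_id', one_div,
    add_comm]

theorem logDeriv_Gamma_nat_add_one (n : ℕ) :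
    logDeriv Gamma (n + 1) = logDeriv Gamma 1 + ∑ i ∈ range n, 1 / ((i : ℝ) + 1) := by
  induction n with
  | zero => simp
  | succ n ih =>
    have hn : ∀ m : ℕ, (n : ℝ) + 1 ≠ -m := fun m h => by
      linarith [(n.cast_nonneg : (0 : ℝ) ≤ n), (m.cast_nonneg : (0 : ℝ) ≤ m)]
    rw [Nat.cast_succ, logDeriv_Gamma_add_one hn, ih, sum_range_succ, one_div, add_assoc]

theorem hasDerivAt_log_Gamma {x : ℝ} (hx : ∀ m : ℕ, x ≠ -m) :
    HasDerivAt (fun y => log (Gamma y)) (logDeriv Gamma x) x :=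
  (differentiableAt_Gamma hx).hasDerivAt.log (Gamma_ne_zero hx)

end Real

theorem HasDerivAt.tendsto_mul_comp_inv_atTop {F : ℝ → ℝ} {L : ℝ} (hF : HasDerivAt F L 0)
    (hF0 : F 0 = 0) : Tendsto (fun t => t * F t⁻¹) atTop (𝓝 L) := by
  have := hF.tendsto_slope_zero_right.comp tendsto_inv_atTop_nhdsGT_zero
  simpa [Function.comp_def, hF0] using this

noncomputable def logBlissRatio (N ε : ℝ) : ℝ :=
  log (Gamma (N + N * ε)) - log (Gamma (1 + ε)) - log (Gamma (N + (N - 1) * ε))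

theorem logBlissRatio_zero (N : ℝ) : logBlissRatio N 0 = 0 := by
  simp [logBlissRatio]

theorem hasDerivAt_logBlissRatio {N : ℝ} (hN : 0 < N) :
    HasDerivAt (logBlissRatio N) (logDeriv Gamma N - logDeriv Gamma 1) 0 := by
  have hpos : ∀ {x : ℝ}, 0 < x → ∀ m : ℕ, x ≠ -m := fun hx m h => by
    linarith [(m.cast_nonneg : (0 : ℝ) ≤ m)]
  have hlogGamma : ∀ {a : ℝ}, 0 < a → ∀ c : ℝ,
      HasDerivAt (fun ε => log (Gamma (a + c * ε))) (logDeriv Gamma a * c) 0 := fun {a} ha c =>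
    (hasDerivAt_log_Gamma (hpos ha)).comp_of_eq 0
      (by simpa using ((hasDerivAt_id (0 : ℝ)).const_mul c).const_add a) (by simp)
  have h := ((hlogGamma hN N).fun_sub (hlogGamma one_pos 1)).fun_sub (hlogGamma hN (N - 1))
  simp only [one_mul] at h
  exact h.congr_deriv (by ring)

theorem CBliss_base_eq_exp_logBlissRatio {N k : ℝ} (hN : 1 ≤ N) (hk : 1 < k) :
    (k - 1) * Gamma (N * k / (k - 1)) / (Gamma (1 / (k - 1)) * Gamma ((N * k - 1) / (k - 1))) =
      exp (logBlissRatio N (k - 1)⁻¹) := by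
  set ε := (k - 1)⁻¹ with hε
  have hk0 : k - 1 ≠ 0 := by linarith
  have hε0 : 0 < ε := inv_pos.2 (sub_pos.2 hk)
  have hk1 : k - 1 = ε⁻¹ := by rw [hε, inv_inv]
  have hNk : N * k / (k - 1) = N + N * ε := by rw [hε]; field_simp; ring
  have hNk' : (N * k - 1) / (k - 1) = N + (N - 1) * ε := by rw [hε]; field_simp; ring
  have hGamma : Gamma (1 / (k - 1)) = (k - 1) * Gamma (1 + ε) := by
    rw [add_comm, Gamma_add_one hε0.ne', one_div, ← hε, ← mul_assoc, hk1, inv_mul_cancel₀ hε0.ne',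
      one_mul]
  rw [logBlissRatio, exp_sub, exp_sub, exp_log (Gamma_pos_of_pos (by positivity)),
    exp_log (Gamma_pos_of_pos (by positivity)), exp_log (Gamma_pos_of_pos (by nlinarith)),
    hNk, hNk', hGamma]
  field_simp

theorem mul_CBliss_eq_exp {N k : ℝ} (hN : 1 ≤ N) (hk : 1 < k) :
    k * CBliss N k = 1 / (N - 1) * exp ((k - 1) * logBlissRatio N (k - 1)⁻¹) := by
  rw [CBliss, CBliss_base_eq_exp_logBlissRatio hN hk, ← exp_mul, mul_comm (logBlissRatio _ _)]
  field_simp [(by linarith : k ≠ 0)]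

theorem tendsto_mul_CBliss {N : ℝ} (hN : 1 ≤ N) :
    Tendsto (fun k => k * CBliss N k) atTop
      (𝓝 (1 / (N - 1) * exp (logDeriv Gamma N - logDeriv Gamma 1))) := by
  have hlim := ((hasDerivAt_logBlissRatio (by linarith)).tendsto_mul_comp_inv_atTop
    (logBlissRatio_zero N)).comp (tendsto_atTop_add_const_right atTop (-1) tendsto_id)
  refine Tendsto.congr' ?_ (hlim.rexp.const_mul _)
  filter_upwards [eventually_gt_atTop 1] with k hk
  simp [mul_CBliss_eq_exp hN hk, sub_eq_add_neg]

/-- for an integer `N ≥ 2`,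
`k · C_{N,k} → (1/(N-1)) · e^{1 + 1/2 + ⋯ + 1/(N-1)}` as `k → ∞`. -/
theorem CBliss_mul_tendsto (N : ℕ) (hN : 2 ≤ N) :
    Filter.Tendsto (fun k : ℝ => k * CBliss (N : ℝ) k) Filter.atTop
      (nhds ((1 / ((N : ℝ) - 1)) *
        Real.exp (∑ i ∈ Finset.range (N - 1), (1 : ℝ) / (i + 1)))) := by
  have hN1 : ((N - 1 : ℕ) : ℝ) + 1 = N := by
    rw [Nat.cast_sub (by omega), Nat.cast_one, sub_add_cancel]
  have hHarmonic :
      ∑ i ∈ range (N - 1), (1 : ℝ) / (i + 1) = logDeriv Gamma N - logDeriv Gamma 1 := by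
    have h := logDeriv_Gamma_nat_add_one (N - 1)
    rw [hN1] at h
    linarith
  rw [hHarmonic]
  exact tendsto_mul_CBliss (by exact_mod_cast (by omega : 1 ≤ N))
end

section
/- Let N ≥ 2 be an integer and w ∈ E_N with w ≥ 0. Suppose the maximum of s ↦ w(s)^N/s^{N−1} over (0,1] equals 1 − δ and is attained at a ∈ (0,1] with w(a) > 0, i.e. 1 − δ = max_{s∈(0,1]} w(s)^N/s^{N−1} = w(a)^N/a^{N−1} with δ ∈ [0,1]. Then (w(a)/a)^{N−2} ∫₀^a | w'(s) − w(a)/a |² ds + ∫_a^1 |w'(s)|^N ds ≤ δ. -/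
/-! Writing `c = w(a)/a`, the hypothesis says `a c^N = 1 - δ` and `∫₀^a w' = a c`. The elementary
inequality `|t|^N ≥ c^N + N c^{N-1} (t - c) + c^{N-2} (t - c)^2` (convexity of `|t|^N` with a
quadratic remainder), integrated over `(0, a]`, kills the linear term and gives
`∫₀^a |w'|^N ≥ (1 - δ) + c^{N-2} ∫₀^a (w' - c)^2`; subtracting this from `∫₀^1 |w'|^N = 1`
leaves the claim. -/

open MeasureTheory Real Set Filter

theorem one_add_mul_sub_add_sq_le_pow {t : ℝ} (ht : 0 ≤ t) {n : ℕ} (hn : 2 ≤ n) :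
    1 + n * (t - 1) + (t - 1) ^ 2 ≤ t ^ n := by
  induction n, hn using Nat.le_induction with
  | base => exact le_of_eq (by push_cast; ring)
  | succ n hn ih =>
    have hn' : (2 : ℝ) ≤ n := by exact_mod_cast hn
    have hrem : 0 ≤ (t - 1) ^ 2 * (n + t - 1) := mul_nonneg (sq_nonneg _) (by linarith)
    calc 1 + ((n + 1 : ℕ) : ℝ) * (t - 1) + (t - 1) ^ 2
        ≤ t * (1 + n * (t - 1) + (t - 1) ^ 2) := by push_cast; linear_combination hrem
      _ ≤ t * t ^ n := mul_le_mul_of_nonneg_left ih ht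
      _ = t ^ (n + 1) := by ring

theorem one_add_mul_sub_add_sq_le_abs_pow (t : ℝ) {n : ℕ} (hn : 2 ≤ n) :
    1 + n * (t - 1) + (t - 1) ^ 2 ≤ |t| ^ n := by
  rcases le_total 0 t with ht | ht
  · rw [abs_of_nonneg ht]
    exact one_add_mul_sub_add_sq_le_pow ht hn
  · -- the bound for `-t` exceeds the one for `t` by `-2t(n - 2) ≥ 0`
    have hneg := one_add_mul_sub_add_sq_le_pow (neg_nonneg.mpr ht) hn
    have hn' : (0 : ℝ) ≤ n - 2 := by
      have : (2 : ℝ) ≤ n := by exact_mod_cast hn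
      linarith
    rw [abs_of_nonpos ht]
    nlinarith [mul_nonneg (neg_nonneg.mpr ht) hn']

theorem pow_add_mul_sub_add_sq_le_abs_pow {c : ℝ} (hc : 0 < c) (t : ℝ) {n : ℕ} (hn : 2 ≤ n) :
    c ^ n + n * c ^ (n - 1) * (t - c) + c ^ (n - 2) * (t - c) ^ 2 ≤ |t| ^ n := by
  obtain ⟨m, rfl⟩ := Nat.exists_eq_add_of_le' hn
  simp only [show m + 2 - 1 = m + 1 by omega, Nat.add_sub_cancel]
  calc c ^ (m + 2) + ((m + 2 : ℕ) : ℝ) * c ^ (m + 1) * (t - c) + c ^ m * (t - c) ^ 2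
      = c ^ (m + 2) * (1 + ((m + 2 : ℕ) : ℝ) * (t / c - 1) + (t / c - 1) ^ 2) := by
        field_simp
        ring
    _ ≤ c ^ (m + 2) * |t / c| ^ (m + 2) := by
        gcongr
        exact one_add_mul_sub_add_sq_le_abs_pow _ hn
    _ = |t| ^ (m + 2) := by
        rw [abs_div, abs_of_pos hc, div_pow]
        field_simp

theorem mul_pow_add_integral_sq_sub_le_integral_abs_pow {α : Type*} [MeasurableSpace α]
    {μ : Measure α} [IsFiniteMeasure μ] {g : α → ℝ} {c : ℝ} {n : ℕ} (hn : 2 ≤ n) (hc : 0 < c)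
    (hg : Integrable g μ) (hgn : Integrable (fun x => |g x| ^ n) μ)
    (hmean : ∫ x, g x ∂μ = μ.real univ * c) :
    μ.real univ * c ^ n + c ^ (n - 2) * ∫ x, (g x - c) ^ 2 ∂μ ≤ ∫ x, |g x| ^ n ∂μ := by
  set L : α → ℝ := fun x => c ^ n + n * c ^ (n - 1) * (g x - c)
  have hsub : Integrable (fun x => g x - c) μ := hg.sub (integrable_const c)
  have hlin : Integrable (fun x => n * c ^ (n - 1) * (g x - c)) μ := hsub.const_mul _
  have hL : Integrable L μ := (integrable_const _).add hlin
  have hLint : ∫ x, L x ∂μ = μ.real univ * c ^ n := by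
    rw [integral_add (integrable_const _) hlin, integral_const_mul,
      integral_sub hg (integrable_const c), hmean]
    simp only [integral_const, smul_eq_mul]
    ring
  have hpt : ∀ x, L x + c ^ (n - 2) * (g x - c) ^ 2 ≤ |g x| ^ n := fun x =>
    pow_add_mul_sub_add_sq_le_abs_pow hc (g x) hn
  have hQ : Integrable (fun x => c ^ (n - 2) * (g x - c) ^ 2) μ := by
    refine (hgn.sub hL).mono' ((hsub.aestronglyMeasurable.pow 2).const_mul _)
      (ae_of_all _ fun x => ?_)
    rw [Real.norm_of_nonneg (by positivity), Pi.sub_apply]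
    linarith [hpt x]
  calc μ.real univ * c ^ n + c ^ (n - 2) * ∫ x, (g x - c) ^ 2 ∂μ
      = ∫ x, L x + c ^ (n - 2) * (g x - c) ^ 2 ∂μ := by
        rw [integral_add hL hQ, integral_const_mul, hLint]
    _ ≤ ∫ x, |g x| ^ n ∂μ := integral_mono (hL.add hQ) hgn hpt

theorem close_to_moser_general (N : ℕ) (hN : 2 ≤ N) (w g : ℝ → ℝ) (hw : MemEN N w g)
    (a δ : ℝ) (ha : a ∈ Set.Ioc (0:ℝ) 1) (hwa : 0 < w a)
    (heq : w a ^ N / a ^ (N - 1) = 1 - δ) :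
    (w a / a) ^ (N - 2) * (∫ s in Set.Ioc (0:ℝ) a, |g s - w a / a| ^ 2) +
      (∫ s in Set.Ioc a 1, |g s| ^ N) ≤ δ := by
  obtain ⟨hrepr, -, hint, hgN, hnorm⟩ := hw
  obtain ⟨ha0, ha1⟩ := ha
  have hg : IntegrableOn g (Ioc 0 1) :=
    (intervalIntegrable_iff_integrableOn_Ioc_of_le zero_le_one).mp hint
  have hvol : (volume.restrict (Ioc 0 a)).real univ = a := by
    rw [measureReal_restrict_apply_univ, Real.volume_real_Ioc_of_le ha0.le, sub_zero]
  have hmean : ∫ s in Ioc 0 a, g s = a * (w a / a) := by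
    rw [mul_div_cancel₀ _ ha0.ne', hrepr a ⟨ha0.le, ha1⟩, intervalIntegral.integral_of_le ha0.le]
  have hconv := mul_pow_add_integral_sq_sub_le_integral_abs_pow hN (div_pos hwa ha0)
    (hg.mono_set (Ioc_subset_Ioc_right ha1)) (hgN.mono_set (Ioc_subset_Ioc_right ha1))
    (by rwa [hvol])
  have hmoser : a * (w a / a) ^ N = 1 - δ := by
    rw [← heq, div_pow, ← pow_sub_one_mul (by omega : N ≠ 0) a]
    field_simp
  have hsplit : (∫ s in Ioc 0 a, |g s| ^ N) + (∫ s in Ioc a 1, |g s| ^ N) = 1 := by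
    rw [← setIntegral_union (Ioc_disjoint_Ioc_of_le le_rfl) measurableSet_Ioc
      (hgN.mono_set (Ioc_subset_Ioc_right ha1)) (hgN.mono_set (Ioc_subset_Ioc_left ha0.le)),
      Ioc_union_Ioc_eq_Ioc ha0.le ha1, hnorm]
  simp only [sq_abs]
  rw [hvol, hmoser] at hconv
  linarith

/-- Lemma 3.1: if `w ∈ E_N`, `w ≥ 0`, and the maximum of
`s ↦ w(s)^N/s^{N-1}` over `(0,1]` equals `1 − δ` and is attained at `a` with `w a > 0`,
then `(w(a)/a)^{N-2} ∫₀^a |w' − w(a)/a|² + ∫_a^1 |w'|^N ≤ δ`. -/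
theorem close_to_moser (N : ℕ) (hN : 2 ≤ N) (w g : ℝ → ℝ) (hw : MemEN N w g)
    (hwpos : ∀ s ∈ Set.Icc (0:ℝ) 1, 0 ≤ w s)
    (a δ : ℝ) (ha : a ∈ Set.Ioc (0:ℝ) 1) (hδ : δ ∈ Set.Icc (0:ℝ) 1) (hwa : 0 < w a)
    (hmax : ∀ s ∈ Set.Ioc (0:ℝ) 1, w s ^ N / s ^ (N - 1) ≤ 1 - δ)
    (heq : w a ^ N / a ^ (N - 1) = 1 - δ) :
    (w a / a) ^ (N - 2) * (∫ s in Set.Ioc (0:ℝ) a, |g s - w a / a| ^ 2) +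
      (∫ s in Set.Ioc a 1, |g s| ^ N) ≤ δ :=
  close_to_moser_general N hN w g hw a δ ha hwa heq
end

section
/- Let N ≥ 2 be an integer and w ∈ E_N with w ≥ 0. Suppose 1 − δ = max_{s∈(0,1]} w(s)^N/s^{N−1} = w(a)^N/a^{N−1} with δ ∈ [0,1] and a ∈ (0,1]. Then w(s) ≤ w(a) + (s − a)^{1 − 1/N} δ^{1/N} for all s ∈ [a, 1]. -/
open MeasureTheory Real Set Filter

lemma abs_intervalIntegral_le_rpow_mul_setIntegral_abs_pow {N : ℕ} (hN : 1 < N) {g : ℝ → ℝ}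
    {c d : ℝ} (hcd : c ≤ d) (hg : IntervalIntegrable g volume c d)
    (hint : IntegrableOn (fun t => |g t| ^ N) (Ioc c d)) :
    |∫ t in c..d, g t| ≤
      (d - c) ^ (1 - 1 / (N : ℝ)) * (∫ t in Ioc c d, |g t| ^ N) ^ (1 / (N : ℝ)) := by
  have hN1 : (1 : ℝ) < N := by exact_mod_cast hN
  have hN0 : ENNReal.ofReal N ≠ 0 := (ENNReal.ofReal_pos.2 (by linarith)).ne'
  set μ := volume.restrict (Ioc c d) with hμ
  have hpq : HolderConjugate (N : ℝ) (N / (N - 1)) :=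
    (holderConjugate_iff_eq_conjExponent hN1).2 rfl
  have hmeas : AEStronglyMeasurable g μ := hg.1.aestronglyMeasurable
  have hmem : MemLp g (ENNReal.ofReal N) μ := by
    rw [← memLp_norm_rpow_iff hmeas hN0 ENNReal.ofReal_ne_top, ENNReal.toReal_ofReal (by linarith),
      ENNReal.div_self hN0 ENNReal.ofReal_ne_top, memLp_one_iff_integrable]
    refine hint.congr_fun (fun x _ => ?_) measurableSet_Ioc
    simp [Real.norm_eq_abs, rpow_natCast]
  have holder := integral_mul_le_Lp_mul_Lq_of_nonneg (μ := μ) hpq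
    (Eventually.of_forall fun x => abs_nonneg (g x)) (Eventually.of_forall fun _ => zero_le_one)
    hmem.norm (memLp_const (1 : ℝ))
  have hpow : ∫ x, |g x| ^ (N : ℝ) ∂μ = ∫ t in Ioc c d, |g t| ^ N := by
    simp only [rpow_natCast, hμ]
  have hconst : ∫ x, (1 : ℝ) ^ ((N : ℝ) / (N - 1)) ∂μ = d - c := by
    simp [hμ, hcd]
  have hexp : 1 / ((N : ℝ) / (N - 1)) = 1 - 1 / N := by
    field_simp
  simp only [mul_one] at holder
  rw [hpow, hconst, hexp] at holder
  calc |∫ t in c..d, g t| ≤ ∫ t in c..d, |g t| := intervalIntegral.abs_integral_le_integral_abs hcd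
    _ = ∫ t, |g t| ∂μ := intervalIntegral.integral_of_le hcd
    _ ≤ _ := holder.trans_eq (mul_comm _ _)

lemma abs_intervalIntegral_pow_le_mul_setIntegral_abs_pow {N : ℕ} (hN : 1 < N) {g : ℝ → ℝ}
    {c d : ℝ} (hcd : c ≤ d) (hg : IntervalIntegrable g volume c d)
    (hint : IntegrableOn (fun t => |g t| ^ N) (Ioc c d)) :
    |∫ t in c..d, g t| ^ N ≤ (d - c) ^ (N - 1) * ∫ t in Ioc c d, |g t| ^ N := by
  have hN0 : (N : ℝ) ≠ 0 := by positivity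
  have hI : 0 ≤ ∫ t in Ioc c d, |g t| ^ N :=
    setIntegral_nonneg measurableSet_Ioc fun _ _ => by positivity
  calc |∫ t in c..d, g t| ^ N
      ≤ ((d - c) ^ (1 - 1 / (N : ℝ)) * (∫ t in Ioc c d, |g t| ^ N) ^ (1 / (N : ℝ))) ^ N :=
        pow_le_pow_left₀ (abs_nonneg _)
          (abs_intervalIntegral_le_rpow_mul_setIntegral_abs_pow hN hcd hg hint) N
    _ = (d - c) ^ (N - 1) * ∫ t in Ioc c d, |g t| ^ N := by
        rw [mul_pow, ← rpow_mul_natCast (sub_nonneg.2 hcd), ← rpow_mul_natCast hI,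
          sub_mul, one_div_mul_cancel hN0, one_mul, rpow_one, ← Nat.cast_pred (by omega),
          rpow_natCast]

lemma setIntegral_Ioc_add_setIntegral_Ioc_le {f : ℝ → ℝ} {b c d e : ℝ} (hbc : b ≤ c) (hcd : c ≤ d)
    (hde : d ≤ e) (hf : IntegrableOn f (Ioc b e)) (hf0 : ∀ x ∈ Ioc b e, 0 ≤ f x) :
    (∫ x in Ioc b c, f x) + ∫ x in Ioc c d, f x ≤ ∫ x in Ioc b e, f x := by
  have hsub : Ioc b d ⊆ Ioc b e := Ioc_subset_Ioc_right hde
  rw [← setIntegral_union (Ioc_disjoint_Ioc_of_le le_rfl) measurableSet_Ioc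
    (hf.mono_set (Ioc_subset_Ioc_right (hcd.trans hde)))
    (hf.mono_set (Ioc_subset_Ioc_left hbc |>.trans hsub)), Ioc_union_Ioc_eq_Ioc hbc hcd]
  exact setIntegral_mono_set hf ((ae_restrict_iff' measurableSet_Ioc).2 (Eventually.of_forall hf0))
    hsub.eventuallyLE

theorem bound_right_of_max_general (N : ℕ) (hN : 2 ≤ N) (w g : ℝ → ℝ) (hw : MemEN N w g)
    (a δ : ℝ) (ha : a ∈ Set.Ioc (0:ℝ) 1)
    (heq : w a ^ N / a ^ (N - 1) = 1 - δ) :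
    ∀ s ∈ Set.Icc a 1,
      w s ≤ w a + (s - a) ^ (1 - 1 / (N : ℝ)) * δ ^ (1 / (N : ℝ)) := by
  obtain ⟨hrep, -, hg, hint, htot⟩ := hw
  obtain ⟨ha0, ha1⟩ := ha
  rintro s ⟨has, hs1⟩
  have hg0a : IntervalIntegrable g volume 0 a :=
    hg.mono_set (uIcc_subset_uIcc_left (by simp [ha0.le, ha1]))
  have hg0s : IntervalIntegrable g volume 0 s :=
    hg.mono_set (uIcc_subset_uIcc_left (by simp [ha0.le.trans has, hs1]))
  have hgas : IntervalIntegrable g volume a s := hg0a.symm.trans hg0s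
  have henergy_left : 1 - δ ≤ ∫ t in Ioc 0 a, |g t| ^ N := by
    have hwa := abs_intervalIntegral_pow_le_mul_setIntegral_abs_pow (by omega) ha0.le hg0a
      (hint.mono_set (Ioc_subset_Ioc_right ha1))
    rw [← hrep a ⟨ha0.le, ha1⟩, sub_zero, pow_abs] at hwa
    rw [← heq, div_le_iff₀' (by positivity)]
    exact (le_abs_self _).trans hwa
  have henergy_right : ∫ t in Ioc a s, |g t| ^ N ≤ δ := by
    have := setIntegral_Ioc_add_setIntegral_Ioc_le ha0.le has hs1 hint fun _ _ => by positivity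
    linarith
  have hincr : w s - w a = ∫ t in a..s, g t := by
    rw [hrep s ⟨ha0.le.trans has, hs1⟩, hrep a ⟨ha0.le, ha1⟩,
      intervalIntegral.integral_interval_sub_left hg0s hg0a]
  have hholder := abs_intervalIntegral_le_rpow_mul_setIntegral_abs_pow (by omega) has hgas
    (hint.mono_set (Ioc_subset_Ioc_left ha0.le |>.trans (Ioc_subset_Ioc_right hs1)))
  calc w s = w a + ∫ t in a..s, g t := by linarith
    _ ≤ w a + |∫ t in a..s, g t| := by gcongr; exact le_abs_self _
    _ ≤ w a + (s - a) ^ (1 - 1 / (N : ℝ)) * δ ^ (1 / (N : ℝ)) := by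
        gcongr
        exact hholder.trans (by gcongr)

/-- Lemma 3.2: if `w ∈ E_N`, `w ≥ 0`, and the maximum of
`s ↦ w(s)^N/s^{N-1}` over `(0,1]` equals `1 − δ` and is attained at `a`, then
`w(s) ≤ w(a) + (s − a)^{1 − 1/N} δ^{1/N}` for all `s ∈ [a,1]`. -/
theorem bound_right_of_max (N : ℕ) (hN : 2 ≤ N) (w g : ℝ → ℝ) (hw : MemEN N w g)
    (hwpos : ∀ s ∈ Set.Icc (0:ℝ) 1, 0 ≤ w s)
    (a δ : ℝ) (ha : a ∈ Set.Ioc (0:ℝ) 1) (hδ : δ ∈ Set.Icc (0:ℝ) 1)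
    (hmax : ∀ s ∈ Set.Ioc (0:ℝ) 1, w s ^ N / s ^ (N - 1) ≤ 1 - δ)
    (heq : w a ^ N / a ^ (N - 1) = 1 - δ) :
    ∀ s ∈ Set.Icc a 1,
      w s ≤ w a + (s - a) ^ (1 - 1 / (N : ℝ)) * δ ^ (1 / (N : ℝ)) :=
  bound_right_of_max_general N hN w g hw a δ ha heq
end

section
/- Let N ≥ 2 be an integer and w ∈ E_N with w ≥ 0. Suppose 1 − δ = max_{s∈(0,1]} w(s)^N/s^{N−1} = w(a)^N/a^{N−1} with δ ∈ [0,1), a ∈ (0,1] and w(a) > 0. Then w(s) ≤ s·(w(a)/a) + (a − s)^{1/2} δ^{1/2} (w(a)/a)^{−(N−2)/2} for all s ∈ [0, a]. -/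
/-!
Put `m = w(a)/a` and `w(s) = s m + t` with `t > 0`. By Jensen, the `N`-energy of `w` on `[0, s]`
and on `[s, a]` is at least `w(s)^N / s^(N-1)` and `(w(a) - w(s))^N / (a - s)^(N-1)`, and the two
energies add up to at most `1`. Expanding both quotients in `t` (Bernoulli's inequality to first,
resp. second order), the first-order terms cancel and the zeroth-order terms add up to
`m^N a = 1 - δ`, leaving `m^(N-2) t^2 / (a - s) ≤ δ`. The second-order expansion of
`(m (a - s) - t)^N` needs `t ≤ m (a - s)`, i.e. `w(s) ≤ w(a)`, which is where the maximality of
`a` enters.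
-/

open MeasureTheory Real Set Filter

theorem pow_add_mul_pow_le_add_pow {x u : ℝ} (hx : 0 ≤ x) (hu : 0 ≤ u) (n : ℕ) :
    x ^ (n + 1) + (n + 1) * x ^ n * u ≤ (x + u) ^ (n + 1) := by
  induction n with
  | zero => simp
  | succ n ih =>
    have : 0 ≤ (n + 1) * x ^ n * u ^ 2 := by positivity
    calc x ^ (n + 1 + 1) + ((n + 1 : ℕ) + 1) * x ^ (n + 1) * u
        ≤ (x + u) * (x ^ (n + 1) + (n + 1) * x ^ n * u) := by push_cast; linear_combination this
      _ ≤ (x + u) * (x + u) ^ (n + 1) := by gcongr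
      _ = (x + u) ^ (n + 1 + 1) := by ring

theorem pow_sub_mul_pow_add_le_sub_pow {x u : ℝ} (hu : 0 ≤ u) (hux : u ≤ x) (k : ℕ) :
    x ^ (k + 2) - (k + 2) * x ^ (k + 1) * u + x ^ k * u ^ 2 ≤ (x - u) ^ (k + 2) := by
  induction k with
  | zero => ring_nf; exact le_rfl
  | succ k ih =>
    have hxu := sub_nonneg.2 hux
    have : 0 ≤ x ^ k * u ^ 2 * ((k + 1) * x + (x - u)) := by
      have := hu.trans hux
      positivity
    calc x ^ (k + 1 + 2) - ((k + 1 : ℕ) + 2) * x ^ (k + 1 + 1) * u + x ^ (k + 1) * u ^ 2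
        ≤ (x - u) * (x ^ (k + 2) - (k + 2) * x ^ (k + 1) * u + x ^ k * u ^ 2) := by
          push_cast; linear_combination this
      _ ≤ (x - u) * (x - u) ^ (k + 2) := by gcongr
      _ = (x - u) ^ (k + 1 + 2) := by ring

theorem add_mul_sq_div_le_add_pow_div_add_sub_pow_div (k : ℕ) {m s b t : ℝ} (hm : 0 ≤ m)
    (hs : 0 < s) (hb : 0 < b) (ht : 0 ≤ t) (htb : t ≤ m * b) :
    m ^ (k + 2) * (s + b) + m ^ k * t ^ 2 / b ≤
      (m * s + t) ^ (k + 2) / s ^ (k + 1) + (m * b - t) ^ (k + 2) / b ^ (k + 1) := by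
  have hleft : m ^ (k + 2) * s + (k + 2) * m ^ (k + 1) * t ≤
      (m * s + t) ^ (k + 2) / s ^ (k + 1) := by
    rw [le_div_iff₀ (by positivity)]
    calc _ = (m * s) ^ (k + 1 + 1) + ((k + 1 : ℕ) + 1) * (m * s) ^ (k + 1) * t := by
          push_cast; ring
      _ ≤ (m * s + t) ^ (k + 2) := pow_add_mul_pow_le_add_pow (by positivity) ht (k + 1)
  have hright : m ^ (k + 2) * b - (k + 2) * m ^ (k + 1) * t + m ^ k * t ^ 2 / b ≤
      (m * b - t) ^ (k + 2) / b ^ (k + 1) := by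
    rw [le_div_iff₀ (by positivity)]
    calc _ = (m * b) ^ (k + 2) - (k + 2) * (m * b) ^ (k + 1) * t + (m * b) ^ k * t ^ 2 := by
          field_simp; ring
      _ ≤ (m * b - t) ^ (k + 2) := pow_sub_mul_pow_add_le_sub_pow ht htb k
  linarith

theorem le_rpow_mul_of_pow_mul_sq_div_le {m b δ t : ℝ} {k : ℕ} (hm : 0 < m) (hb : 0 < b)
    (hδ : 0 ≤ δ) (h : m ^ k * t ^ 2 / b ≤ δ) :
    t ≤ b ^ (1 / 2 : ℝ) * δ ^ (1 / 2 : ℝ) * m ^ (-((k : ℝ) / 2)) := by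
  rw [← sqrt_eq_rpow, ← sqrt_eq_rpow, rpow_neg hm.le, rpow_div_two_eq_sqrt _ hm.le, rpow_natCast]
  refine (abs_le_of_sq_le_sq' ?_ (by positivity)).2
  rw [mul_pow, mul_pow, inv_pow, ← pow_mul, mul_comm k, pow_mul, sq_sqrt hb.le, sq_sqrt hδ,
    sq_sqrt hm.le, ← div_eq_mul_inv, le_div_iff₀ (by positivity)]
  rw [div_le_iff₀ hb] at h
  linarith

theorem lt_of_pow_succ_div_pow_le {n : ℕ} (hn : n ≠ 0) {x y s a : ℝ} (hy : 0 < y) (hs : 0 < s)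
    (hsa : s < a) (h : x ^ (n + 1) / s ^ n ≤ y ^ (n + 1) / a ^ n) : x < y := by
  have ha : 0 < a := hs.trans hsa
  refine lt_of_pow_lt_pow_left₀ (n + 1) hy.le ?_
  calc x ^ (n + 1) ≤ s ^ n * (y ^ (n + 1) / a ^ n) := by rwa [div_le_iff₀' (by positivity)] at h
    _ < a ^ n * (y ^ (n + 1) / a ^ n) := by gcongr
    _ = y ^ (n + 1) := mul_div_cancel₀ _ (by positivity)

theorem pow_intervalIntegral_div_le {n : ℕ} {g : ℝ → ℝ} {c d : ℝ} (hcd : c < d)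
    (hg : IntervalIntegrable g volume c d)
    (hgn : IntervalIntegrable (fun t => |g t| ^ (n + 1)) volume c d) :
    (∫ t in c..d, g t) ^ (n + 1) / (d - c) ^ n ≤ ∫ t in c..d, |g t| ^ (n + 1) := by
  have hdc : 0 < d - c := sub_pos.2 hcd
  have hvol : volume (Ioc c d) = ENNReal.ofReal (d - c) := Real.volume_Ioc
  have jensen := (convexOn_pow (n + 1)).map_set_average_le (continuous_pow _).continuousOn
    isClosed_Ici (by simp [hvol, hcd]) (by simp [hvol]) (ae_of_all _ fun t => abs_nonneg (g t))
    ((intervalIntegrable_iff_integrableOn_Ioc_of_le hcd.le).1 hg).abs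
    ((intervalIntegrable_iff_integrableOn_Ioc_of_le hcd.le).1 hgn)
  simp only [setAverage_eq, measureReal_def, hvol, ENNReal.toReal_ofReal hdc.le, smul_eq_mul,
    ← intervalIntegral.integral_of_le hcd.le] at jensen
  have habs : (∫ t in c..d, g t) ^ (n + 1) ≤ (∫ t in c..d, |g t|) ^ (n + 1) :=
    calc (∫ t in c..d, g t) ^ (n + 1) ≤ |∫ t in c..d, g t| ^ (n + 1) :=
          abs_pow (∫ t in c..d, g t) (n + 1) ▸ le_abs_self _
      _ ≤ (∫ t in c..d, |g t|) ^ (n + 1) := by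
          gcongr; exact intervalIntegral.abs_integral_le_integral_abs hcd.le
  calc (∫ t in c..d, g t) ^ (n + 1) / (d - c) ^ n
      ≤ (∫ t in c..d, |g t|) ^ (n + 1) / (d - c) ^ n := by gcongr
    _ = (d - c) * ((d - c)⁻¹ * ∫ t in c..d, |g t|) ^ (n + 1) := by
        rw [mul_pow, inv_pow, pow_succ (d - c)]; field_simp
    _ ≤ (d - c) * ((d - c)⁻¹ * ∫ t in c..d, |g t| ^ (n + 1)) := by gcongr
    _ = ∫ t in c..d, |g t| ^ (n + 1) := by field_simp

theorem MemEN.pow_div_add_pow_div_le_one {n : ℕ} {u g : ℝ → ℝ} (hu : MemEN (n + 1) u g)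
    {s a : ℝ} (hs : 0 < s) (hsa : s < a) (ha : a ≤ 1) :
    u s ^ (n + 1) / s ^ n + (u a - u s) ^ (n + 1) / (a - s) ^ n ≤ 1 := by
  obtain ⟨hrep, -, hg, hgn, hnorm⟩ := hu
  replace hgn : IntervalIntegrable (fun t => |g t| ^ (n + 1)) volume 0 1 :=
    (intervalIntegrable_iff_integrableOn_Ioc_of_le zero_le_one).2 hgn
  have h0 : (0 : ℝ) ∈ Icc (0 : ℝ) 1 := left_mem_Icc.2 zero_le_one
  have hs1 : s ∈ Icc (0 : ℝ) 1 := ⟨hs.le, hsa.le.trans ha⟩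
  have ha1 : a ∈ Icc (0 : ℝ) 1 := ⟨hs.le.trans hsa.le, ha⟩
  have hmono {f : ℝ → ℝ} (hf : IntervalIntegrable f volume 0 1) {c d : ℝ}
      (hc : c ∈ Icc (0 : ℝ) 1) (hd : d ∈ Icc (0 : ℝ) 1) : IntervalIntegrable f volume c d :=
    hf.mono_set <| uIcc_subset_uIcc (by rwa [uIcc_of_le zero_le_one])
      (by rwa [uIcc_of_le zero_le_one])
  have hdiff : ∫ t in s..a, g t = u a - u s := by
    rw [hrep a ha1, hrep s hs1,
      intervalIntegral.integral_interval_sub_left (hmono hg h0 ha1) (hmono hg h0 hs1)]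
  have h0s := pow_intervalIntegral_div_le hs (hmono hg h0 hs1) (hmono hgn h0 hs1)
  have hsa' := pow_intervalIntegral_div_le hsa (hmono hg hs1 ha1) (hmono hgn hs1 ha1)
  rw [sub_zero, ← hrep s hs1] at h0s
  rw [hdiff] at hsa'
  calc _ ≤ (∫ t in 0..s, |g t| ^ (n + 1)) + ∫ t in s..a, |g t| ^ (n + 1) := add_le_add h0s hsa'
    _ = ∫ t in 0..a, |g t| ^ (n + 1) :=
        intervalIntegral.integral_add_adjacent_intervals (hmono hgn h0 hs1) (hmono hgn hs1 ha1)
    _ ≤ ∫ t in 0..1, |g t| ^ (n + 1) := intervalIntegral.integral_mono_interval le_rfl ha1.1 ha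
        (ae_of_all _ fun t => by positivity) hgn
    _ = 1 := by rw [intervalIntegral.integral_of_le zero_le_one, hnorm]

theorem bound_left_of_max_general (N : ℕ) (hN : 2 ≤ N) (w g : ℝ → ℝ) (hw : MemEN N w g)
    (a δ : ℝ) (ha : a ∈ Set.Ioc (0:ℝ) 1) (hδ : δ ∈ Set.Ico (0:ℝ) 1) (hwa : 0 < w a)
    (hmax : ∀ s ∈ Set.Ioc (0:ℝ) 1, w s ^ N / s ^ (N - 1) ≤ 1 - δ)
    (heq : w a ^ N / a ^ (N - 1) = 1 - δ) :
    ∀ s ∈ Set.Icc (0:ℝ) a,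
      w s ≤ s * (w a / a) +
        (a - s) ^ ((1:ℝ)/2) * δ ^ ((1:ℝ)/2) * (w a / a) ^ (-(((N : ℝ) - 2) / 2)) := by
  obtain ⟨k, rfl⟩ : ∃ k, N = k + 2 := ⟨N - 2, by omega⟩
  rw [show k + 2 - 1 = k + 1 from rfl] at hmax heq
  rintro s ⟨hs0, hsa⟩
  have ha0 := ha.1
  set m := w a / a
  have hm : 0 < m := div_pos hwa ha0
  have hwa_eq : w a = m * a := (div_mul_cancel₀ _ ha0.ne').symm
  rw [show -((((k + 2 : ℕ) : ℝ) - 2) / 2) = -((k : ℝ) / 2) by push_cast; ring, mul_comm s]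
  rcases le_or_gt (w s) (m * s) with hle | hlt
  · have := sub_nonneg.2 hsa
    have := hδ.1
    have : 0 ≤ (a - s) ^ (1 / 2 : ℝ) * δ ^ (1 / 2 : ℝ) * m ^ (-((k : ℝ) / 2)) := by positivity
    linarith
  have hs : 0 < s := hs0.lt_of_ne (by rintro rfl; simp [hw.2.1] at hlt)
  have hsa' : s < a := hsa.lt_of_ne (by rintro rfl; linarith)
  have hws : w s < w a :=
    lt_of_pow_succ_div_pow_le (by omega) hwa hs hsa' ((hmax s ⟨hs, hsa.trans ha.2⟩).trans heq.ge)
  have hma : m ^ (k + 2) * a = 1 - δ := by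
    rw [← heq, hwa_eq, mul_pow, pow_succ a (k + 1)]; field_simp
  have hkey := add_mul_sq_div_le_add_pow_div_add_sub_pow_div k hm.le hs (sub_pos.2 hsa')
    (sub_pos.2 hlt).le (t := w s - m * s) (by rw [hwa_eq] at hws; linarith)
  rw [add_sub_cancel, hma, add_sub_cancel, show m * (a - s) - (w s - m * s) = w a - w s by
    rw [hwa_eq]; ring] at hkey
  have henergy := hw.pow_div_add_pow_div_le_one hs hsa' ha.2
  have hbound := le_rpow_mul_of_pow_mul_sq_div_le hm (sub_pos.2 hsa') hδ.1 (t := w s - m * s)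
    (k := k) (by linarith)
  linarith

/-- Lemma 3.3: if `w ∈ E_N`, `w ≥ 0`, and the maximum of
`s ↦ w(s)^N/s^{N-1}` over `(0,1]` equals `1 − δ` (`δ ∈ [0,1)`) and is attained at `a`
with `w a > 0`, then `w(s) ≤ s (w(a)/a) + (a − s)^{1/2} δ^{1/2} (w(a)/a)^{−(N−2)/2}`
for all `s ∈ [0,a]`. -/
theorem bound_left_of_max (N : ℕ) (hN : 2 ≤ N) (w g : ℝ → ℝ) (hw : MemEN N w g)
    (hwpos : ∀ s ∈ Set.Icc (0:ℝ) 1, 0 ≤ w s)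
    (a δ : ℝ) (ha : a ∈ Set.Ioc (0:ℝ) 1) (hδ : δ ∈ Set.Ico (0:ℝ) 1) (hwa : 0 < w a)
    (hmax : ∀ s ∈ Set.Ioc (0:ℝ) 1, w s ^ N / s ^ (N - 1) ≤ 1 - δ)
    (heq : w a ^ N / a ^ (N - 1) = 1 - δ) :
    ∀ s ∈ Set.Icc (0:ℝ) a,
      w s ≤ s * (w a / a) +
        (a - s) ^ ((1:ℝ)/2) * δ ^ ((1:ℝ)/2) * (w a / a) ^ (-(((N : ℝ) - 2) / 2)) :=
  bound_left_of_max_general N hN w g hw a δ ha hδ hwa hmax heq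
end

section
/- Let N ≥ 2 be an integer and w ∈ E_N with w ≥ 0. Suppose 1 − δ = max_{s∈(0,1]} w(s)^N/s^{N−1} = w(a)^N/a^{N−1} with a ∈ (0,1], and assume 0 < δ < 1/2. Then w(s) ≤ s·a^{−1/N} + s^{(N−1)/N} (2δ)^{1/N} for all s ∈ [0, a]. -/
open MeasureTheory Real Set Filter

/-! Put `q = w a / a`. Hölder's inequality on `[0, s]` and `[s, a]` bounds the energy
`s |x|^N + (a - s) |y|^N ≤ 1` of the slopes `x = w s / s` and `y = (w a - w s) / (a - s)`, whose
weighted mean is `q`. Expanding `|·|^N` around `q` (tangent line for `y`; tangent line plus the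
extra term `(x - q)^N` for `x ≥ q`), the first-order terms cancel and what is left is
`a q^N + s (x - q)^N ≤ 1`. As `a q^N = 1 - δ`, this is `(w s - s q)^N ≤ δ s^(N-1)`, while
`s q ≤ s a^(-1/N)` because `a q^N ≤ 1`. -/

lemma mul_div_pow_eq_pow_div_pow_pred {K : Type*} [Field K] {N : ℕ} (hN : N ≠ 0) {a b : K}
    (ha : a ≠ 0) : a * (b / a) ^ N = b ^ N / a ^ (N - 1) := by
  obtain ⟨m, rfl⟩ := Nat.exists_eq_add_one_of_ne_zero hN
  rw [div_pow, Nat.add_sub_cancel]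
  field_simp
  ring

lemma pow_add_mul_sub_le_pow (n : ℕ) {q z : ℝ} (hq : 0 ≤ q) (hz : 0 ≤ z) :
    q ^ n + n * q ^ (n - 1) * (z - q) ≤ z ^ n := by
  have hgap : z ^ n - q ^ n - n * q ^ (n - 1) * (z - q)
      = ∑ i ∈ Finset.range n, (z - q) * (z ^ i - q ^ i) * q ^ (n - 1 - i) := by
    rw [← geom_sum₂_mul, ← geom_sum₂_self, ← sub_mul, ← Finset.sum_sub_distrib, Finset.sum_mul]
    exact Finset.sum_congr rfl fun i _ => by ring
  have hterm (i : ℕ) : 0 ≤ (z - q) * (z ^ i - q ^ i) := by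
    rcases le_total q z with h | h
    · exact mul_nonneg (sub_nonneg.2 h) (sub_nonneg.2 (pow_le_pow_left₀ hq h i))
    · exact mul_nonneg_of_nonpos_of_nonpos (sub_nonpos.2 h)
        (sub_nonpos.2 (pow_le_pow_left₀ hz h i))
  have hgap_nonneg : 0 ≤ z ^ n - q ^ n - n * q ^ (n - 1) * (z - q) :=
    hgap ▸ Finset.sum_nonneg fun i _ => mul_nonneg (hterm i) (pow_nonneg hq _)
  linarith

lemma pow_add_mul_add_pow_le_add_pow {n : ℕ} (hn : 2 ≤ n) {q h : ℝ} (hq : 0 ≤ q) (hh : 0 ≤ h) :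
    q ^ n + n * q ^ (n - 1) * h + h ^ n ≤ (q + h) ^ n := by
  obtain ⟨m, rfl⟩ := Nat.exists_eq_add_of_le' hn
  rw [add_pow, Finset.sum_range_succ, Finset.sum_range_succ, Finset.sum_range_succ']
  simp only [Nat.cast_add, Nat.cast_ofNat, Nat.add_one_sub_one, Nat.reduceSubDiff, pow_zero,
    tsub_zero, one_mul, Nat.choose_zero_right, Nat.cast_one, mul_one, add_tsub_cancel_left, pow_one,
    Nat.choose_succ_self_right, tsub_self, Nat.choose_self]
  have hmid : 0 ≤ ∑ k ∈ Finset.range m,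
      q ^ (k + 1) * h ^ (m + 1 - k) * ((m + 2).choose (k + 1) : ℝ) :=
    Finset.sum_nonneg fun k _ => by positivity
  linarith

lemma add_mul_pow_le_mul_abs_pow_add_mul_abs_pow {N : ℕ} (hN : 2 ≤ N) {s t q x y : ℝ}
    (hs : 0 ≤ s) (ht : 0 ≤ t) (hq : 0 ≤ q) (hqx : q ≤ x)
    (hxy : s * x + t * y = (s + t) * q) :
    (s + t) * q ^ N + s * (x - q) ^ N ≤ s * |x| ^ N + t * |y| ^ N := by
  have hx : q ^ N + N * q ^ (N - 1) * (x - q) + (x - q) ^ N ≤ |x| ^ N := by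
    rw [abs_of_nonneg (hq.trans hqx)]
    simpa using pow_add_mul_add_pow_le_add_pow hN hq (sub_nonneg.2 hqx)
  have hy : q ^ N + N * q ^ (N - 1) * (y - q) ≤ |y| ^ N := by
    refine le_trans ?_ (pow_add_mul_sub_le_pow N hq (abs_nonneg y))
    gcongr
    exact le_abs_self y
  linear_combination s * hx + t * hy - N * q ^ (N - 1) * hxy

lemma abs_intervalAverage_pow_le (N : ℕ) {g : ℝ → ℝ} {u v : ℝ} (huv : u < v)
    (hg : IntervalIntegrable g volume u v)
    (hgN : IntervalIntegrable (fun t => |g t| ^ N) volume u v) :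
    |⨍ t in u..v, g t| ^ N ≤ ⨍ t in u..v, |g t| ^ N := by
  have hvol : volume (uIoc u v) = ENNReal.ofReal (v - u) := by
    rw [uIoc_of_le huv.le, Real.volume_Ioc]
  have habs : |⨍ t in u..v, g t| ≤ ⨍ t in u..v, |g t| := by
    rw [interval_average_eq_div, interval_average_eq_div, abs_div, abs_of_pos (sub_pos.2 huv)]
    gcongr
    exact intervalIntegral.abs_integral_le_integral_abs huv.le
  calc |⨍ t in u..v, g t| ^ N ≤ (⨍ t in u..v, |g t|) ^ N := by gcongr
    _ ≤ ⨍ t in u..v, |g t| ^ N :=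
      (convexOn_pow N).map_set_average_le (continuous_pow N).continuousOn isClosed_Ici
        (by simp [hvol, huv]) (by simp [hvol]) (Eventually.of_forall fun t => abs_nonneg (g t))
        hg.def'.abs hgN.def'

lemma MemEN.slope_energy_le_one {N : ℕ} {w g : ℝ → ℝ} (hw : MemEN N w g) {s a : ℝ}
    (hs : 0 < s) (hsa : s < a) (ha : a ≤ 1) :
    s * |w s / s| ^ N + (a - s) * |(w a - w s) / (a - s)| ^ N ≤ 1 := by
  obtain ⟨hwg, -, hg, hgN, hgN_one⟩ := hw
  have hsub {u v : ℝ} (hu : 0 ≤ u) (huv : u ≤ v) (hv : v ≤ 1) : uIcc u v ⊆ uIcc 0 1 := by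
    rw [uIcc_of_le huv, uIcc_of_le zero_le_one]
    exact Icc_subset_Icc hu hv
  have hgN' : IntervalIntegrable (fun t => |g t| ^ N) volume 0 1 :=
    (intervalIntegrable_iff_integrableOn_Ioc_of_le zero_le_one).2 hgN
  have hJensen {u v : ℝ} (hu : 0 ≤ u) (huv : u < v) (hv : v ≤ 1) :
      (v - u) * |⨍ t in u..v, g t| ^ N ≤ ∫ t in u..v, |g t| ^ N := by
    calc (v - u) * |⨍ t in u..v, g t| ^ N ≤ (v - u) * ⨍ t in u..v, |g t| ^ N :=
          mul_le_mul_of_nonneg_left (abs_intervalAverage_pow_le N huv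
            (hg.mono_set (hsub hu huv.le hv)) (hgN'.mono_set (hsub hu huv.le hv))) (by linarith)
      _ = ∫ t in u..v, |g t| ^ N := by
          rw [interval_average_eq_div]
          field_simp [(sub_pos.2 huv).ne']
  have hs_avg : w s / s = ⨍ t in 0..s, g t := by
    rw [interval_average_eq_div, sub_zero, hwg s ⟨hs.le, hsa.le.trans ha⟩]
  have hsa_avg : (w a - w s) / (a - s) = ⨍ t in s..a, g t := by
    rw [interval_average_eq_div, hwg s ⟨hs.le, hsa.le.trans ha⟩, hwg a ⟨hs.le.trans hsa.le, ha⟩,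
      intervalIntegral.integral_interval_sub_left
        (hg.mono_set (hsub le_rfl (hs.le.trans hsa.le) ha))
        (hg.mono_set (hsub le_rfl hs.le (hsa.le.trans ha)))]
  calc s * |w s / s| ^ N + (a - s) * |(w a - w s) / (a - s)| ^ N
      ≤ (∫ t in 0..s, |g t| ^ N) + ∫ t in s..a, |g t| ^ N := by
        rw [hs_avg, hsa_avg]
        simpa only [sub_zero] using
          add_le_add (hJensen le_rfl hs (hsa.le.trans ha)) (hJensen hs.le hsa ha)
    _ = ∫ t in Ioc 0 a, |g t| ^ N := by
        rw [intervalIntegral.integral_add_adjacent_intervals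
          (hgN'.mono_set (hsub le_rfl hs.le (hsa.le.trans ha)))
          (hgN'.mono_set (hsub hs.le hsa.le ha)), intervalIntegral.integral_of_le (hs.trans hsa).le]
    _ ≤ ∫ t in Ioc 0 1, |g t| ^ N :=
        setIntegral_mono_set hgN (Eventually.of_forall fun t => by positivity)
          (Ioc_subset_Ioc le_rfl ha).eventuallyLE
    _ = 1 := hgN_one

lemma le_rpow_mul_rpow_of_pow_le {N : ℕ} (hN : N ≠ 0) {d c s : ℝ} (hc : 0 ≤ c) (hs : 0 ≤ s)
    (h : d ^ N ≤ c * s ^ (N - 1)) :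
    d ≤ s ^ (((N : ℝ) - 1) / N) * c ^ (1 / (N : ℝ)) := by
  rcases le_or_gt d 0 with hd | hd
  · exact hd.trans (by positivity)
  have hNpos : (0 : ℝ) < N := by positivity
  calc d ≤ (c * s ^ (N - 1)) ^ (N : ℝ)⁻¹ :=
        (le_rpow_inv_iff_of_pos hd.le (by positivity) hNpos).2 (by rwa [rpow_natCast])
    _ = s ^ (((N : ℝ) - 1) / N) * c ^ (1 / (N : ℝ)) := by
        rw [mul_rpow hc (by positivity), ← rpow_natCast, ← rpow_mul hs, mul_comm,
          Nat.cast_sub (Nat.one_le_iff_ne_zero.2 hN), Nat.cast_one, div_eq_mul_inv, one_div]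

lemma le_rpow_neg_one_div_of_mul_pow_le_one {N : ℕ} (hN : N ≠ 0) {a q : ℝ} (ha : 0 < a)
    (hq : 0 ≤ q) (h : a * q ^ N ≤ 1) :
    q ≤ a ^ (-(1 / (N : ℝ))) := by
  rw [one_div, rpow_neg ha.le, ← inv_rpow ha.le]
  refine (le_rpow_inv_iff_of_pos hq (by positivity) (by positivity)).2 ?_
  rw [rpow_natCast, ← one_div, le_div_iff₀ ha]
  linarith

lemma MemEN.pow_sub_mul_slope_le {N : ℕ} (hN : 2 ≤ N) {w g : ℝ → ℝ} (hw : MemEN N w g)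
    {s a : ℝ} (hs : 0 < s) (hsa : s < a) (ha : a ≤ 1) (hwa : 0 ≤ w a)
    (hslope : s * (w a / a) ≤ w s) :
    (w s - s * (w a / a)) ^ N ≤ (1 - w a ^ N / a ^ (N - 1)) * s ^ (N - 1) := by
  have hN0 : N ≠ 0 := by omega
  have ha0 : 0 < a := hs.trans hsa
  have hqx : w a / a ≤ w s / s := by rwa [le_div_iff₀ hs, mul_comm]
  have hmean :
      s * (w s / s) + (a - s) * ((w a - w s) / (a - s)) = (s + (a - s)) * (w a / a) := by
    field_simp [(sub_pos.2 hsa).ne']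
    ring
  have hconv := add_mul_pow_le_mul_abs_pow_add_mul_abs_pow hN hs.le (sub_nonneg.2 hsa.le)
    (div_nonneg hwa ha0.le) hqx hmean
  have henergy := hw.slope_energy_le_one hs hsa ha
  rw [add_sub_cancel, mul_div_pow_eq_pow_div_pow_pred hN0 ha0.ne',
    show w s / s - w a / a = (w s - s * (w a / a)) / s by field_simp,
    mul_div_pow_eq_pow_div_pow_pred hN0 hs.ne'] at hconv
  rw [← div_le_iff₀ (by positivity)]
  linarith

theorem bound_left_of_max'_general (N : ℕ) (hN : 2 ≤ N) (w g : ℝ → ℝ) (hw : MemEN N w g)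
    (hwpos : ∀ s ∈ Set.Icc (0:ℝ) 1, 0 ≤ w s)
    (a δ : ℝ) (ha : a ∈ Set.Ioc (0:ℝ) 1) (hδ0 : 0 < δ)
    (heq : w a ^ N / a ^ (N - 1) = 1 - δ) :
    ∀ s ∈ Set.Icc (0:ℝ) a,
      w s ≤ s * a ^ (-(1 / (N : ℝ))) +
        s ^ (((N : ℝ) - 1) / N) * (2 * δ) ^ (1 / (N : ℝ)) := by
  rintro s ⟨hs0, hsa⟩
  obtain ⟨ha0, ha1⟩ := ha
  have hwa : 0 ≤ w a := hwpos a ⟨ha0.le, ha1⟩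
  have hq : w a / a ≤ a ^ (-(1 / (N : ℝ))) := by
    refine le_rpow_neg_one_div_of_mul_pow_le_one (by omega) ha0 (div_nonneg hwa ha0.le) ?_
    rw [mul_div_pow_eq_pow_div_pow_pred (by omega) ha0.ne', heq]
    linarith
  have hlinear : s * (w a / a) ≤ s * a ^ (-(1 / (N : ℝ))) := by gcongr
  rcases le_or_gt (w s) (s * (w a / a)) with hle | hlt
  · exact hle.trans (hlinear.trans (le_add_of_nonneg_right (by positivity)))
  have hs : 0 < s := hs0.lt_of_ne (by rintro rfl; simp [hw.2.1] at hlt)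
  have hsa' : s < a :=
    hsa.lt_of_ne (by rintro rfl; exact (mul_div_cancel₀ (w s) ha0.ne').not_lt hlt)
  have hdev := hw.pow_sub_mul_slope_le hN hs hsa' ha1 hwa hlt.le
  rw [heq, sub_sub_cancel] at hdev
  have hexcess := le_rpow_mul_rpow_of_pow_le (c := 2 * δ) (by omega) (by positivity) hs.le
    (hdev.trans (by gcongr; linarith))
  linarith

/-- Lemma 3.4: if `w ∈ E_N`, `w ≥ 0`, the maximum of
`s ↦ w(s)^N/s^{N-1}` over `(0,1]` equals `1 − δ` with `0 < δ < 1/2` and is attained at `a`,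
then `w(s) ≤ s a^{−1/N} + s^{(N−1)/N} (2δ)^{1/N}` for all `s ∈ [0,a]`. -/
theorem bound_left_of_max' (N : ℕ) (hN : 2 ≤ N) (w g : ℝ → ℝ) (hw : MemEN N w g)
    (hwpos : ∀ s ∈ Set.Icc (0:ℝ) 1, 0 ≤ w s)
    (a δ : ℝ) (ha : a ∈ Set.Ioc (0:ℝ) 1) (hδ0 : 0 < δ) (hδ1 : δ < 1/2)
    (hmax : ∀ s ∈ Set.Ioc (0:ℝ) 1, w s ^ N / s ^ (N - 1) ≤ 1 - δ)
    (heq : w a ^ N / a ^ (N - 1) = 1 - δ) :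
    ∀ s ∈ Set.Icc (0:ℝ) a,
      w s ≤ s * a ^ (-(1 / (N : ℝ))) +
        s ^ (((N : ℝ) - 1) / N) * (2 * δ) ^ (1 / (N : ℝ)) :=
  bound_left_of_max'_general N hN w g hw hwpos a δ ha hδ0 heq
end
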